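/- arXiv:0704.0656 — 4 statements merged into one kernel-verified Lean document; each statement's English description precedes it below -/
import Mathlib

section
/- The Lagrange problem on time scales has no abnormal extremals when the right endpoint is free. Let (y, u) be an admissible pair, let ψ₀ ≥ 0 be a constant and let ψ : 𝕋 → ℝⁿ be delta differentiable at every t ∈ 𝕋^k, with ψ₀ and ψ not both identically zero. Suppose that for all t ∈ 𝕋^k: ψ^Δ(t) = −( ψ₀·L_y(t, y(t), u(t)) + φ_y(t, y(t), u(t))ᵀ·ψ(σ(t)) ) and ψ₀·L_u(t, y(t), u(t)) + φ_u(t, y(t), u(t))ᵀ·ψ(σ(t)) = 0, and that the transversality condition ψ(b) = 0 holds (i.e. (y, u, ψ₀, ψ) is an extremal of the problem with y(b) free). Then ψ₀ > 0 (the extremal is normal). -/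
open Set Filter

noncomputable section

-- Forward jump operator of the set `S`.
open Classical in
def tsSigma (S : Set ℝ) (t : ℝ) : ℝ :=
  if ({s | s ∈ S ∧ t < s}).Nonempty then sInf {s | s ∈ S ∧ t < s} else t

-- Backward jump operator of the set `S`.
open Classical in
def tsRho (S : Set ℝ) (t : ℝ) : ℝ :=
  if ({s | s ∈ S ∧ s < t}).Nonempty then sSup {s | s ∈ S ∧ s < t} else t

/-- Graininess function. -/
def tsMu (S : Set ℝ) (t : ℝ) : ℝ := tsSigma S t - t

/-- `S^k = S \ (ρ(max S), max S]`. -/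
def tsTk (S : Set ℝ) : Set ℝ := S \ Set.Ioc (tsRho S (sSup S)) (sSup S)

/-- Delta differentiability at `t` of `f` regarded as a function on the time scale `S`,
with delta derivative `d`. -/
def deltaDiffAt {E : Type*} [NormedAddCommGroup E] [NormedSpace ℝ E]
    (S : Set ℝ) (f : ℝ → E) (t : ℝ) (d : E) : Prop :=
  ∀ ε > 0, ∃ δ > 0, ∀ s ∈ S ∩ Set.Ioo (t - δ) (t + δ),
    ‖f (tsSigma S t) - f s - (tsSigma S t - s) • d‖ ≤ ε * |tsSigma S t - s|

/-- rd-continuity of `f` on its domain `S`: continuity (within `S`) at right-dense points and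
existence of a finite left-sided limit along `S` at left-dense points. -/
def RdContinuousOn {E : Type*} [NormedAddCommGroup E]
    (S : Set ℝ) (f : ℝ → E) : Prop :=
  ∀ t ∈ S, (tsSigma S t = t → ContinuousWithinAt f S t) ∧
    (tsRho S t = t → ∃ l : E, Filter.Tendsto f (nhdsWithin t (S ∩ Set.Iio t)) (nhds l))

/-- `y ∈ C¹_rd(T)`, with delta derivative `yd`. -/
def C1rd {E : Type*} [NormedAddCommGroup E] [NormedSpace ℝ E]
    (T : Set ℝ) (y yd : ℝ → E) : Prop :=
  (∀ t ∈ tsTk T, deltaDiffAt T y t (yd t)) ∧ RdContinuousOn (tsTk T) yd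

/-- `F` is a delta antiderivative of `f` on the time scale `S`; the delta integral
`∫_c^d f Δt` is `F d - F c` for any such `F`. -/
def IsDeltaAntideriv {E : Type*} [NormedAddCommGroup E] [NormedSpace ℝ E]
    (S : Set ℝ) (f F : ℝ → E) : Prop :=
  ∀ t ∈ tsTk S, deltaDiffAt S F t (f t)

/-- Sup norm of `f` over the set `S`. -/
def tsSupNorm {E : Type*} [NormedAddCommGroup E] (S : Set ℝ) (f : ℝ → E) : ℝ :=
  sSup ((fun t => ‖f t‖) '' S)

abbrev En (n : ℕ) : Type := EuclideanSpace ℝ (Fin n)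

/-- An admissible pair for the Lagrange problem: `u` rd-continuous, `y ∈ C¹_rd` with delta
derivative `yd` satisfying the control system `y^Δ = φ(t, y, u)` on `T^k`. -/
def AdmissiblePair {n m : ℕ} (T : Set ℝ) (φ : ℝ → En n → En m → En n)
    (y yd : ℝ → En n) (u : ℝ → En m) : Prop :=
  C1rd T y yd ∧ RdContinuousOn T u ∧ ∀ t ∈ tsTk T, yd t = φ t (y t) (u t)

lemma my_eq_zero_of_forall_le {x c : ℝ} (hx : 0 ≤ x) (hc : 0 ≤ c)
    (h : ∀ ε > 0, x ≤ ε * c) : x = 0 := by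
  have hle : x ≤ 0 := by
    apply le_of_forall_pos_le_add
    intro ε hε
    calc x ≤ (ε / (c + 1)) * c := h _ (by positivity)
    _ ≤ 0 + ε := by rw [div_mul_eq_mul_div]; rw [div_le_iff₀ (by linarith)]; nlinarith
  linarith

lemma tsSigma_props (T : Set ℝ) (hcl : IsClosed T) {t z : ℝ} (hz : z ∈ T) (htz : t < z) :
    tsSigma T t ∈ T ∧ t ≤ tsSigma T t ∧ ∀ w ∈ T, t < w → tsSigma T t ≤ w := by
  have hne : ({s | s ∈ T ∧ t < s}).Nonempty := ⟨z, hz, htz⟩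
  have hbdd : BddBelow {s | s ∈ T ∧ t < s} := ⟨t, fun x hx => le_of_lt hx.2⟩
  rw [tsSigma, if_pos hne]
  refine ⟨?_, ?_, ?_⟩
  · have h1 := csInf_mem_closure hne hbdd
    have h2 : closure {s | s ∈ T ∧ t < s} ⊆ closure T :=
      closure_mono (fun x hx => hx.1)
    have := h2 h1
    rwa [hcl.closure_eq] at this
  · exact le_csInf hne (fun x hx => hx.2.le)
  · intro w hw htw; exact csInf_le hbdd ⟨hw, htw⟩

lemma tsRho_props (T : Set ℝ) (hcl : IsClosed T) {t z : ℝ} (hz : z ∈ T) (hzt : z < t) :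
    tsRho T t ∈ T ∧ tsRho T t ≤ t ∧ ∀ w ∈ T, w < t → w ≤ tsRho T t := by
  have hne : ({s | s ∈ T ∧ s < t}).Nonempty := ⟨z, hz, hzt⟩
  have hbdd : BddAbove {s | s ∈ T ∧ s < t} := ⟨t, fun x hx => le_of_lt hx.2⟩
  rw [tsRho, if_pos hne]
  refine ⟨?_, ?_, ?_⟩
  · have h1 := csSup_mem_closure hne hbdd
    have h2 : closure {s | s ∈ T ∧ s < t} ⊆ closure T :=
      closure_mono (fun x hx => hx.1)
    have := h2 h1
    rwa [hcl.closure_eq] at this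
  · exact csSup_le hne (fun x hx => hx.2.le)
  · intro w hw hwt; exact le_csSup hbdd ⟨hw, hwt⟩

/-- jump identity -/
lemma deltaDiffAt_jump {E : Type*} [NormedAddCommGroup E] [NormedSpace ℝ E]
    {S : Set ℝ} {f : ℝ → E} {t : ℝ} {d : E}
    (h : deltaDiffAt S f t d) (ht : t ∈ S) :
    f (tsSigma S t) = f t + (tsSigma S t - t) • d := by
  have key : ‖f (tsSigma S t) - f t - (tsSigma S t - t) • d‖ = 0 := by
    apply my_eq_zero_of_forall_le (norm_nonneg _) (abs_nonneg _)
    intro ε hε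
    obtain ⟨δ, hδ, hδ'⟩ := h ε hε
    exact hδ' t ⟨ht, by constructor <;> linarith⟩
  have := norm_eq_zero.mp key
  have := sub_eq_zero.mp this
  linear_combination (norm := module) this

lemma le_tsSigma (S : Set ℝ) (t : ℝ) : t ≤ tsSigma S t := by
  rw [tsSigma]
  split_ifs with h
  · exact le_csInf h (fun x hx => hx.2.le)
  · exact le_refl t

lemma deltaDiffAt_continuousWithinAt {E : Type*} [NormedAddCommGroup E] [NormedSpace ℝ E]
    {S : Set ℝ} {f : ℝ → E} {t : ℝ} {d : E}
    (h : deltaDiffAt S f t d) (ht : t ∈ S) : ContinuousWithinAt f S t := by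
  rw [Metric.continuousWithinAt_iff]
  intro ε hε
  set σt := tsSigma S t with hσt
  have hμ : 0 ≤ σt - t := by have := le_tsSigma S t; linarith
  set μ := σt - t with hμdef
  have hjump := deltaDiffAt_jump h ht
  set ε₁ : ℝ := min 1 (ε / (4 * (μ + 1))) with hε₁def
  have hε₁ : 0 < ε₁ := lt_min one_pos (by positivity)
  obtain ⟨δ₁, hδ₁, hkey⟩ := h ε₁ hε₁
  set δ : ℝ := min δ₁ (min 1 (ε / (4 * (‖d‖ + 1)))) with hδdef
  refine ⟨δ, lt_min hδ₁ (lt_min one_pos (by positivity)), ?_⟩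
  intro x hx hdist
  rw [Real.dist_eq] at hdist
  have hxIoo : x ∈ S ∩ Set.Ioo (t - δ₁) (t + δ₁) := by
    refine ⟨hx, ?_, ?_⟩ <;>
    · have h1 : |x - t| < δ₁ := lt_of_lt_of_le hdist (min_le_left _ _)
      rw [abs_lt] at h1; linarith [h1.1, h1.2]
  have hest := hkey x hxIoo
  have hdecomp : f x - f t = (x - t) • d - (f σt - f x - (σt - x) • d) := by
    linear_combination (norm := module) hjump
  rw [dist_eq_norm, hdecomp]
  have h1 : ‖(x - t) • d - (f σt - f x - (σt - x) • d)‖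
      ≤ |x - t| * ‖d‖ + ε₁ * |σt - x| := by
    calc ‖(x - t) • d - (f σt - f x - (σt - x) • d)‖
        ≤ ‖(x - t) • d‖ + ‖f σt - f x - (σt - x) • d‖ := norm_sub_le _ _
      _ ≤ |x - t| * ‖d‖ + ε₁ * |σt - x| := by
          rw [norm_smul, Real.norm_eq_abs]; exact add_le_add le_rfl hest
  have habs : |σt - x| ≤ μ + |x - t| := by
    have : σt - x = μ + (t - x) := by rw [hμdef]; ring
    rw [this]
    calc |μ + (t - x)| ≤ |μ| + |t - x| := abs_add_le _ _
      _ = μ + |x - t| := by rw [abs_of_nonneg hμ, abs_sub_comm]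
  have hδle1 : δ ≤ δ₁ := min_le_left _ _
  have hδle2 : δ ≤ 1 := le_trans (min_le_right _ _) (min_le_left _ _)
  have hδle3 : δ ≤ ε / (4 * (‖d‖ + 1)) := le_trans (min_le_right _ _) (min_le_right _ _)
  have hε₁le1 : ε₁ ≤ 1 := min_le_left _ _
  have hε₁le2 : ε₁ ≤ ε / (4 * (μ + 1)) := min_le_right _ _
  have hxt : |x - t| ≤ δ := hdist.le
  calc ‖(x - t) • d - (f σt - f x - (σt - x) • d)‖
      ≤ |x - t| * ‖d‖ + ε₁ * |σt - x| := h1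
    _ ≤ δ * ‖d‖ + ε₁ * (μ + δ) := by
        have hb : |σt - x| ≤ μ + δ := le_trans habs (by linarith)
        have := mul_le_mul_of_nonneg_left hb hε₁.le
        have := mul_le_mul_of_nonneg_right hxt (norm_nonneg d)
        linarith
    _ < ε := by
        have hδpos : 0 < δ := lt_min hδ₁ (lt_min one_pos (by positivity))
        have hA : δ * (4 * (‖d‖ + 1)) ≤ ε := by
          rw [le_div_iff₀ (by positivity)] at hδle3; linarith
        have hB : ε₁ * (4 * (μ + 1)) ≤ ε := by
          rw [le_div_iff₀ (by positivity)] at hε₁le2; linarith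
        have hR : ε₁ * δ ≤ 1 * δ := mul_le_mul_of_nonneg_right hε₁le1 hδpos.le
        nlinarith [norm_nonneg d, hδpos, hε₁]

lemma ts_mvt {E : Type*} [NormedAddCommGroup E] [NormedSpace ℝ E]
    (T : Set ℝ) (hcl : IsClosed T) (f fd : ℝ → E) (C : ℝ) (hC : 0 ≤ C)
    {s t : ℝ} (hs : s ∈ T) (ht : t ∈ T) (hst : s ≤ t)
    (hdiff : ∀ r ∈ T, s ≤ r → r ≤ t → deltaDiffAt T f r (fd r))
    (hbd : ∀ r ∈ T, s ≤ r → r < t → ‖fd r‖ ≤ C) :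
    ‖f t - f s‖ ≤ C * (t - s) := by
  rcases eq_or_lt_of_le hst with rfl | hlt
  · simp
  suffices H : ∀ ε > 0, ‖f t - f s‖ ≤ (C + ε) * (t - s) by
    refine le_of_forall_pos_le_add ?_
    intro ε' hε'
    have hts0 : (0:ℝ) < t - s := by linarith
    have h1 := H (ε' / (t - s)) (div_pos hε' hts0)
    have h2 : (C + ε' / (t - s)) * (t - s) = C * (t - s) + ε' := by
      field_simp
    linarith [h2 ▸ h1]
  intro ε hε
  set U := {r | r ∈ T ∧ r ∈ Icc s t ∧ ‖f r - f s‖ ≤ (C + ε) * (r - s)} with hU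
  have hsU : s ∈ U := ⟨hs, ⟨le_rfl, hst⟩, by simp⟩
  have hUsub : U ⊆ T ∩ Icc s t := fun r hr => ⟨hr.1, hr.2.1⟩
  have hUbdd : BddAbove U := ⟨t, fun r hr => hr.2.1.2⟩
  set d := sSup U with hd
  have hdcl : d ∈ closure U := csSup_mem_closure ⟨s, hsU⟩ hUbdd
  have hdTI : d ∈ T ∩ Icc s t :=
    closure_minimal hUsub (hcl.inter isClosed_Icc) hdcl
  have hdT : d ∈ T := hdTI.1
  have hds : s ≤ d := hdTI.2.1
  have hdt : d ≤ t := hdTI.2.2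
  have hcont : ContinuousWithinAt f T d :=
    deltaDiffAt_continuousWithinAt (hdiff d hdT hds hdt) hdT
  have hdineq : ‖f d - f s‖ ≤ (C + ε) * (d - s) := by
    have hne : (nhdsWithin d U).NeBot := mem_closure_iff_nhdsWithin_neBot.mp hdcl
    have hcontU : Tendsto (fun r => ‖f r - f s‖) (nhdsWithin d U) (nhds ‖f d - f s‖) := by
      have h1 : ContinuousWithinAt f U d := hcont.mono (fun r hr => (hUsub hr).1)
      exact ((h1.sub continuousWithinAt_const).norm)
    have hcontg : Tendsto (fun r => (C + ε) * (r - s)) (nhdsWithin d U)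
        (nhds ((C + ε) * (d - s))) :=
      ((continuous_const.mul (continuous_id.sub continuous_const)).continuousWithinAt)
    exact le_of_tendsto_of_tendsto hcontU hcontg
      (eventually_nhdsWithin_of_forall (fun r hr => hr.2.2))
  have hdeq : d = t := by
    by_contra hne'
    have hdlt : d < t := lt_of_le_of_ne hdt hne'
    obtain ⟨hσT, hdσ, hσle⟩ := tsSigma_props T hcl ht hdlt
    set σd := tsSigma T d with hσd
    have hσdt : σd ≤ t := hσle t ht hdlt
    have hfdC : ‖fd d‖ ≤ C := hbd d hdT hds hdlt
    rcases eq_or_lt_of_le hdσ with hdense | hscat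
    · -- right-dense point
      obtain ⟨δ, hδ, hkey⟩ := hdiff d hdT hds hdt ε hε
      have hne2 : ({x | x ∈ T ∧ d < x}).Nonempty := ⟨t, ht, hdlt⟩
      have hinf : sInf {x | x ∈ T ∧ d < x} = d := by
        have hts : tsSigma T d = sInf {x | x ∈ T ∧ d < x} := by
          rw [tsSigma, if_pos hne2]
        rw [← hts, ← hσd, ← hdense]
      obtain ⟨r, hrmem, hrlt⟩ := exists_lt_of_csInf_lt hne2
        (show sInf {x | x ∈ T ∧ d < x} < d + min δ (t - d) by
          rw [hinf]; exact lt_add_of_pos_right d (lt_min hδ (by linarith)))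
      have hrT : r ∈ T := hrmem.1
      have hdr : d < r := hrmem.2
      have hrt : r < t := by
        have : r < d + (t - d) := lt_of_lt_of_le hrlt (by linarith [min_le_right δ (t - d)])
        linarith
      have hrδ : r ∈ T ∩ Set.Ioo (d - δ) (d + δ) := by
        refine ⟨hrT, by linarith, ?_⟩
        have : r < d + δ := lt_of_lt_of_le hrlt (by linarith [min_le_left δ (t - d)])
        exact this
      have hest := hkey r hrδ
      rw [← hσd, ← hdense] at hest
      have h1 : ‖f r - f d‖ ≤ (C + ε) * (r - d) := by
        have h2 : f r - f d = -(f d - f r - (d - r) • fd d) + (r - d) • fd d := by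
          linear_combination (norm := module) (0 : E)
        rw [h2]
        calc ‖-(f d - f r - (d - r) • fd d) + (r - d) • fd d‖
            ≤ ‖f d - f r - (d - r) • fd d‖ + ‖(r - d) • fd d‖ := by
              rw [← norm_neg (f d - f r - (d - r) • fd d)] at *
              exact norm_add_le _ _
          _ ≤ ε * |d - r| + |r - d| * ‖fd d‖ := by
              rw [norm_smul, Real.norm_eq_abs]
              exact add_le_add hest le_rfl
          _ ≤ (C + ε) * (r - d) := by
              rw [abs_of_nonpos (by linarith), abs_of_nonneg (by linarith)]
              nlinarith
      have hrU : r ∈ U := by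
        refine ⟨hrT, ⟨by linarith, hrt.le⟩, ?_⟩
        calc ‖f r - f s‖ ≤ ‖f r - f d‖ + ‖f d - f s‖ := norm_sub_le_norm_sub_add_norm_sub _ _ _
          _ ≤ (C + ε) * (r - d) + (C + ε) * (d - s) := add_le_add h1 hdineq
          _ = (C + ε) * (r - s) := by ring
      have := le_csSup hUbdd hrU
      linarith
    · -- right-scattered point
      have hjump := deltaDiffAt_jump (hdiff d hdT hds hdt) hdT
      rw [← hσd] at hjump
      have hσU : σd ∈ U := by
        refine ⟨hσT, ⟨le_trans hds hdσ, hσdt⟩, ?_⟩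
        rw [hjump]
        calc ‖f d + (σd - d) • fd d - f s‖
            ≤ ‖f d - f s‖ + ‖(σd - d) • fd d‖ := by
              have : f d + (σd - d) • fd d - f s = (f d - f s) + (σd - d) • fd d := by abel
              rw [this]; exact norm_add_le _ _
          _ ≤ (C + ε) * (d - s) + (σd - d) * C := by
              refine add_le_add hdineq ?_
              rw [norm_smul, Real.norm_eq_abs, abs_of_nonneg (by linarith)]
              exact mul_le_mul_of_nonneg_left hfdC (by linarith)
          _ ≤ (C + ε) * (σd - s) := by nlinarith
      have := le_csSup hUbdd hσU
      linarith
  rw [hdeq] at hdineq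
  exact hdineq

set_option maxHeartbeats 1000000 in
theorem no_abnormal_extremals_free_right_endpoint
    {n m : ℕ} (hm : 1 ≤ m) (hmn : m ≤ n)
    (T₀ : Set ℝ) (hT₀closed : IsClosed T₀)
    (a b : ℝ) (ha : a ∈ T₀) (hb : b ∈ T₀) (hab : a < b)
    (T : Set ℝ) (hT : T = Icc a b ∩ T₀)
    (hT3 : ∃ c ∈ T, c ≠ a ∧ c ≠ b)
    (L : ℝ → En n → En m → ℝ) (φ : ℝ → En n → En m → En n)
    (Ly : ℝ → En n → En m → En n) (Lu : ℝ → En n → En m → En m)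
    (φy : ℝ → En n → En m → (En n →L[ℝ] En n))
    (φu : ℝ → En n → En m → (En m →L[ℝ] En n))
    (hLc : ContinuousOn (fun p : ℝ × En n × En m => L p.1 p.2.1 p.2.2)
      (T ×ˢ (univ : Set (En n × En m))))
    (hφc : ContinuousOn (fun p : ℝ × En n × En m => φ p.1 p.2.1 p.2.2)
      (T ×ˢ (univ : Set (En n × En m))))
    (hLC1 : ∀ t ∈ T, ContDiff ℝ 1 (fun p : En n × En m => L t p.1 p.2))
    (hφC1 : ∀ t ∈ T, ContDiff ℝ 1 (fun p : En n × En m => φ t p.1 p.2))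
    (hLy : ∀ t ∈ T, ∀ (y : En n) (u : En m), HasGradientAt (fun z => L t z u) (Ly t y u) y)
    (hLu : ∀ t ∈ T, ∀ (y : En n) (u : En m), HasGradientAt (fun w => L t y w) (Lu t y u) u)
    (hφy : ∀ t ∈ T, ∀ (y : En n) (u : En m), HasFDerivAt (fun z => φ t z u) (φy t y u) y)
    (hφu : ∀ t ∈ T, ∀ (y : En n) (u : En m), HasFDerivAt (fun w => φ t y w) (φu t y u) u)
    (hLyc : ContinuousOn (fun p : ℝ × En n × En m => Ly p.1 p.2.1 p.2.2)
      (T ×ˢ (univ : Set (En n × En m))))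
    (hLuc : ContinuousOn (fun p : ℝ × En n × En m => Lu p.1 p.2.1 p.2.2)
      (T ×ˢ (univ : Set (En n × En m))))
    (hφyc : ContinuousOn (fun p : ℝ × En n × En m => φy p.1 p.2.1 p.2.2)
      (T ×ˢ (univ : Set (En n × En m))))
    (hφuc : ContinuousOn (fun p : ℝ × En n × En m => φu p.1 p.2.1 p.2.2)
      (T ×ˢ (univ : Set (En n × En m))))
    (y yd : ℝ → En n) (u : ℝ → En m)
    (hadm : AdmissiblePair T φ y yd u)
    (ψ0 : ℝ) (hψ0 : 0 ≤ ψ0) (ψ ψd : ℝ → En n)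
    (hψdiff : ∀ t ∈ tsTk T, deltaDiffAt T ψ t (ψd t))
    (hnt : ¬(ψ0 = 0 ∧ ∀ t ∈ T, ψ t = 0))
    (hadj : ∀ t ∈ tsTk T,
      ψd t = -(ψ0 • Ly t (y t) (u t)
        + ContinuousLinearMap.adjoint (φy t (y t) (u t)) (ψ (tsSigma T t))))
    (hstat : ∀ t ∈ tsTk T,
      ψ0 • Lu t (y t) (u t)
        + ContinuousLinearMap.adjoint (φu t (y t) (u t)) (ψ (tsSigma T t)) = 0)
    (htrv : ψ b = 0) :
    0 < ψ0 := by
  rcases lt_or_eq_of_le hψ0 with hpos | heq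
  · exact hpos
  exfalso
  apply hnt
  have hψ00 : ψ0 = 0 := heq.symm
  refine ⟨hψ00, ?_⟩
  -- Setup
  have hTcl : IsClosed T := by rw [hT]; exact isClosed_Icc.inter hT₀closed
  have haT : a ∈ T := by rw [hT]; exact ⟨⟨le_rfl, hab.le⟩, ha⟩
  have hbT : b ∈ T := by rw [hT]; exact ⟨⟨hab.le, le_rfl⟩, hb⟩
  have hTsub : ∀ x ∈ T, a ≤ x ∧ x ≤ b := by
    intro x hx; rw [hT] at hx; exact ⟨hx.1.1, hx.1.2⟩
  have hsupT : sSup T = b :=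
    le_antisymm (csSup_le ⟨b, hbT⟩ (fun x hx => (hTsub x hx).2))
      (le_csSup ⟨b, fun x hx => (hTsub x hx).2⟩ hbT)
  have hTk : ∀ x ∈ T, x < b → x ∈ tsTk T := by
    intro x hx hxb
    refine ⟨hx, fun hmem => ?_⟩
    rw [hsupT] at hmem
    obtain ⟨_, _, hub⟩ := tsRho_props T hTcl haT hab
    exact absurd (hub x hx hxb) (not_le.mpr hmem.1)
  have hTkb : tsRho T b = b → b ∈ tsTk T := by
    intro hρ
    refine ⟨hbT, fun hmem => ?_⟩
    rw [hsupT, hρ] at hmem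
    exact absurd hmem.2 (not_le.mpr hmem.1)
  have hψcont : ∀ x ∈ tsTk T, ContinuousWithinAt ψ T x := fun x hx =>
    deltaDiffAt_continuousWithinAt (hψdiff x hx) hx.1
  -- adjoint equation with ψ0 = 0
  have hadj' : ∀ t ∈ tsTk T,
      ψd t = -(ContinuousLinearMap.adjoint (φy t (y t) (u t)) (ψ (tsSigma T t))) := by
    intro t htk
    have := hadj t htk
    rw [hψ00] at this
    simpa using this
  -- The set S
  set S := {x | x ∈ T ∧ ∀ s ∈ T, x ≤ s → ψ s = 0} with hSdef
  have hbS : b ∈ S := by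
    refine ⟨hbT, fun s hsT hbs => ?_⟩
    have : s = b := le_antisymm (hTsub s hsT).2 hbs
    rw [this]; exact htrv
  have hSsub : S ⊆ T := fun x hx => hx.1
  have hSbdd : BddBelow S := ⟨a, fun x hx => (hTsub x (hSsub hx)).1⟩
  set c := sInf S with hcdef
  have hcT : c ∈ T := by
    have h1 : c ∈ closure S := csInf_mem_closure ⟨b, hbS⟩ hSbdd
    have h2 := closure_mono hSsub h1
    rwa [hTcl.closure_eq] at h2
  have hac : a ≤ c := le_csInf ⟨b, hbS⟩ (fun x hx => (hTsub x (hSsub hx)).1)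
  have hcb : c ≤ b := csInf_le hSbdd hbS
  have hczero : ∀ s ∈ T, c < s → ψ s = 0 := by
    intro s hsT hcs
    obtain ⟨x, hxS, hxs⟩ := exists_lt_of_csInf_lt ⟨b, hbS⟩ hcs
    exact hxS.2 s hsT hxs.le
  -- ψ c = 0
  have hψc : ψ c = 0 := by
    rcases eq_or_lt_of_le hcb with hceqb | hclb
    · rw [hceqb]; exact htrv
    · have hcTk : c ∈ tsTk T := hTk c hcT hclb
      obtain ⟨hσT, hcσ, hσle⟩ := tsSigma_props T hTcl hbT hclb
      rcases eq_or_lt_of_le hcσ with hdense | hscat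
      · -- right-dense
        have hne2 : ({x | x ∈ T ∧ c < x}).Nonempty := ⟨b, hbT, hclb⟩
        have hinf : sInf {x | x ∈ T ∧ c < x} = c := by
          have hts : tsSigma T c = sInf {x | x ∈ T ∧ c < x} := by
            rw [tsSigma, if_pos hne2]
          rw [← hts, ← hdense]
        set V := T ∩ Set.Ioi c with hVdef
        have hVcl : c ∈ closure V := by
          rw [Metric.mem_closure_iff]
          intro ε hε
          obtain ⟨x, hxmem, hxlt⟩ := exists_lt_of_csInf_lt hne2
            (show sInf {x | x ∈ T ∧ c < x} < c + ε by rw [hinf]; linarith)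
          refine ⟨x, ⟨hxmem.1, hxmem.2⟩, ?_⟩
          rw [Real.dist_eq, abs_of_nonpos (by linarith [hxmem.2])]
          linarith [hxmem.2]
        have hne3 : (nhdsWithin c V).NeBot := mem_closure_iff_nhdsWithin_neBot.mp hVcl
        have h1 : Tendsto ψ (nhdsWithin c V) (nhds (ψ c)) :=
          (hψcont c hcTk).mono inter_subset_left
        have h2 : Tendsto ψ (nhdsWithin c V) (nhds 0) := by
          apply Tendsto.congr' _ tendsto_const_nhds
          filter_upwards [eventually_mem_nhdsWithin] with x hx
          exact (hczero x hx.1 hx.2).symm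
        exact tendsto_nhds_unique h1 h2
      · -- right-scattered
        by_contra hψcne
        have hlb : ∀ x ∈ S, tsSigma T c ≤ x := by
          intro x hxS
          have hcx : c ≤ x := csInf_le hSbdd hxS
          rcases eq_or_lt_of_le hcx with hceq | hclt
          · exact absurd (hxS.2 c hcT (le_of_eq hceq.symm)) hψcne
          · exact hσle x (hSsub hxS) hclt
        have := le_csInf ⟨b, hbS⟩ hlb
        rw [← hcdef] at this
        linarith
  have hcS : c ∈ S := by
    refine ⟨hcT, fun s hsT hcs => ?_⟩
    rcases eq_or_lt_of_le hcs with hceq | hclt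
    · rw [← hceq]; exact hψc
    · exact hczero s hsT hclt
  -- Show c = a
  have hca : c = a := by
    by_contra hne
    have hac' : a < c := lt_of_le_of_ne hac (Ne.symm hne)
    obtain ⟨hρT, hρc, hρub⟩ := tsRho_props T hTcl haT hac'
    set r := tsRho T c with hrdef
    rcases eq_or_lt_of_le hρc with hldense | hlscat
    case inr =>
      -- left-scattered: jump back
      have hrb : r < b := lt_of_lt_of_le hlscat hcb
      have hrTk : r ∈ tsTk T := hTk r hρT hrb
      obtain ⟨hσrT, hrσ, hσrle⟩ := tsSigma_props T hTcl hcT hlscat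
      have hσrc : tsSigma T r = c := by
        refine le_antisymm (hσrle c hcT hlscat) ?_
        have hne2 : ({x | x ∈ T ∧ r < x}).Nonempty := ⟨c, hcT, hlscat⟩
        rw [tsSigma, if_pos hne2]
        refine le_csInf hne2 ?_
        intro w hw
        by_contra hwc
        push_neg at hwc
        exact absurd (hρub w hw.1 hwc) (not_le.mpr hw.2)
      have hψσr : ψ (tsSigma T r) = 0 := by rw [hσrc]; exact hψc
      have hψdr : ψd r = 0 := by
        rw [hadj' r hrTk, hψσr]
        simp
      have hjump := deltaDiffAt_jump (hψdiff r hrTk) hρT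
      rw [hψdr, hσrc, hψc] at hjump
      simp at hjump
      -- hjump : 0 = ψ r
      have hrS : r ∈ S := by
        refine ⟨hρT, fun s hsT hrs => ?_⟩
        rcases eq_or_lt_of_le hrs with hreq | hrlt
        · rw [← hreq, ← hjump]
        · have : c ≤ s := hσrc ▸ hσrle s hsT hrlt
          exact hcS.2 s hsT this
      have := csInf_le hSbdd hrS
      rw [← hcdef] at this
      linarith
    case inl =>
      -- left-dense at c : Gronwall via MVT
      have hcTk : c ∈ tsTk T := by
        rcases eq_or_lt_of_le hcb with hceqb | hclb
        · rw [hceqb]; exact hTkb (by rw [← hceqb, ← hrdef, ← hldense])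
        · exact hTk c hcT hclb
      have hsupr : sSup {x | x ∈ T ∧ x < c} = c := by
        have hne2 : ({x | x ∈ T ∧ x < c}).Nonempty := ⟨a, haT, hac'⟩
        have hts : tsRho T c = sSup {x | x ∈ T ∧ x < c} := by
          rw [tsRho, if_pos hne2]
        rw [← hts, ← hrdef, ← hldense]
      have hne2 : ({x | x ∈ T ∧ x < c}).Nonempty := ⟨a, haT, hac'⟩
      -- left limit of u at c
      obtain ⟨l, hl⟩ := (hadm.2.1 c hcT).2 (by rw [← hrdef, ← hldense])
      -- continuity of y at c
      have hycont : ContinuousWithinAt y T c :=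
        deltaDiffAt_continuousWithinAt (hadm.1.1 c hcTk) hcT
      -- limit of φy along the left
      set F := nhdsWithin c (T ∩ Set.Iio c) with hFdef
      have hgF : Tendsto (fun x : ℝ => (x, y x, u x)) F (nhds (c, y c, l)) := by
        refine Tendsto.prodMk_nhds (tendsto_id.mono_left nhdsWithin_le_nhds) ?_
        exact Tendsto.prodMk_nhds (hycont.mono inter_subset_left) hl
      have hgF' : Tendsto (fun x : ℝ => (x, y x, u x)) F
          (nhdsWithin (c, y c, l) (T ×ˢ (univ : Set (En n × En m)))) := by
        rw [tendsto_nhdsWithin_iff]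
        refine ⟨hgF, ?_⟩
        filter_upwards [eventually_mem_nhdsWithin] with x hx
        exact ⟨hx.1, mem_univ _⟩
      have hΦ : Tendsto (fun x : ℝ => φy x (y x) (u x)) F (nhds (φy c (y c) l)) :=
        (hφyc (c, y c, l) ⟨hcT, mem_univ _⟩).tendsto.comp hgF'
      set M : ℝ := ‖φy c (y c) l‖ + 1 with hMdef
      have hM0 : 0 < M := by positivity
      have hev : ∀ᶠ x in F, ‖φy x (y x) (u x)‖ < M :=
        (hΦ.norm).eventually_lt_const (by rw [hMdef]; linarith)
      rw [hFdef, eventually_iff, Metric.mem_nhdsWithin_iff] at hev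
      obtain ⟨δ₁, hδ₁, hball⟩ := hev
      set δ₂ : ℝ := min δ₁ (1 / (2 * M)) with hδ₂def
      have hδ₂pos : 0 < δ₂ := lt_min hδ₁ (by positivity)
      -- pick t₀
      obtain ⟨t₀, ht₀mem, ht₀gt⟩ := exists_lt_of_lt_csSup hne2
        (show c - δ₂ < sSup {x | x ∈ T ∧ x < c} by rw [hsupr]; linarith)
      have ht₀T : t₀ ∈ T := ht₀mem.1
      have ht₀c : t₀ < c := ht₀mem.2
      -- bound on φy near c
      have hAbd : ∀ q ∈ T, t₀ ≤ q → q < c → ‖φy q (y q) (u q)‖ ≤ M := by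
        intro q hqT hq1 hq2
        refine le_of_lt (hball ⟨?_, hqT, hq2⟩)
        rw [Metric.mem_ball, Real.dist_eq, abs_of_nonpos (by linarith)]
        have : δ₂ ≤ δ₁ := min_le_left _ _
        linarith
      -- membership in T^k for points ≤ c
      have hmemTk : ∀ q ∈ T, q ≤ c → q ∈ tsTk T := by
        intro q hqT hqc
        rcases eq_or_lt_of_le (le_trans hqc hcb) with hqb | hqb
        · have : q = c := le_antisymm hqc (by rw [hqb]; exact hcb)
          rw [this]; exact hcTk
        · exact hTk q hqT hqb
      -- compactness bound
      set Tc := T ∩ Icc t₀ c with hTcdef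
      have hTccomp : IsCompact Tc :=
        IsCompact.of_isClosed_subset isCompact_Icc (hTcl.inter isClosed_Icc)
          inter_subset_right
      have hψcontTc : ContinuousOn ψ Tc := by
        intro q hq
        exact (hψcont q (hmemTk q hq.1 hq.2.2)).mono inter_subset_left
      obtain ⟨K, hK⟩ := hTccomp.exists_bound_of_continuousOn hψcontTc
      have hK0 : 0 ≤ K := le_trans (norm_nonneg (ψ c)) (hK c ⟨hcT, ht₀c.le, le_rfl⟩)
      -- iterate
      have hiter : ∀ j : ℕ, ∀ q ∈ Tc, ‖ψ q‖ ≤ K / 2 ^ j := by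
        intro j
        induction j with
        | zero => simpa using hK
        | succ j ih =>
          intro q hq
          rcases eq_or_lt_of_le hq.2.2 with hqc | hqc
          · rw [hqc, hψc]
            simp only [norm_zero]
            positivity
          · have hKj : (0:ℝ) ≤ K / 2 ^ j := by positivity
            have hmvt := ts_mvt T hTcl ψ ψd (M * (K / 2 ^ j))
              (by positivity) hq.1 hcT hq.2.2
              (fun r hrT hqr hrc => hψdiff r (hmemTk r hrT hrc))
              ?_
            · -- conclude
              have hψq : ‖ψ q‖ ≤ M * (K / 2 ^ j) * (c - q) := by
                rw [hψc, zero_sub, norm_neg] at hmvt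
                exact hmvt
              have hcq : c - q ≤ δ₂ := by
                have := hq.2.1
                linarith
              have hδM : M * δ₂ ≤ 1 / 2 := by
                have h1 : δ₂ ≤ 1 / (2 * M) := min_le_right _ _
                have hMne : M ≠ 0 := hM0.ne'
                calc M * δ₂ ≤ M * (1 / (2 * M)) := mul_le_mul_of_nonneg_left h1 hM0.le
                  _ = 1 / 2 := by field_simp
              have h2 : (2:ℝ) ^ (j + 1) = 2 ^ j * 2 := pow_succ 2 j
              rw [h2]
              have hcq0 : 0 ≤ c - q := by linarith
              calc ‖ψ q‖ ≤ M * (K / 2 ^ j) * (c - q) := hψq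
                _ ≤ M * (K / 2 ^ j) * δ₂ := mul_le_mul_of_nonneg_left hcq (mul_nonneg hM0.le hKj)
                _ = (K / 2 ^ j) * (M * δ₂) := by ring
                _ ≤ (K / 2 ^ j) * (1 / 2) := mul_le_mul_of_nonneg_left hδM hKj
                _ = K / (2 ^ j * 2) := by ring
            · -- derivative bound
              intro w hwT hqw hwc
              have hwTk : w ∈ tsTk T := hmemTk w hwT hwc.le
              obtain ⟨hσwT, hwσ, hσwle⟩ := tsSigma_props T hTcl hcT hwc
              have hσwc : tsSigma T w ≤ c := hσwle c hcT hwc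
              have hσTc : tsSigma T w ∈ Tc :=
                ⟨hσwT, le_trans (le_trans hq.2.1 hqw) hwσ, hσwc⟩
              rw [hadj' w hwTk, norm_neg]
              calc ‖ContinuousLinearMap.adjoint (φy w (y w) (u w)) (ψ (tsSigma T w))‖
                  ≤ ‖(ContinuousLinearMap.adjoint (φy w (y w) (u w)) : En n →L[ℝ] En n)‖
                    * ‖ψ (tsSigma T w)‖ := ContinuousLinearMap.le_opNorm _ _
                _ = ‖φy w (y w) (u w)‖ * ‖ψ (tsSigma T w)‖ := by
                    rw [LinearIsometryEquiv.norm_map]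
                _ ≤ M * (K / 2 ^ j) := by
                    have h1 := hAbd w hwT (le_trans hq.2.1 hqw) hwc
                    have h2 := ih _ hσTc
                    exact mul_le_mul h1 h2 (norm_nonneg _) hM0.le
      -- ψ = 0 on Tc
      have hTczero : ∀ q ∈ Tc, ψ q = 0 := by
        intro q hq
        by_contra hqne
        have hx : 0 < ‖ψ q‖ := norm_pos_iff.mpr hqne
        obtain ⟨j, hj⟩ := pow_unbounded_of_one_lt (K / ‖ψ q‖) (one_lt_two (α := ℝ))
        have h2 : (0:ℝ) < 2 ^ j := by positivity
        have h3 := hiter j q hq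
        rw [le_div_iff₀ h2] at h3
        rw [div_lt_iff₀ hx] at hj
        nlinarith
      -- t₀ ∈ S
      have ht₀S : t₀ ∈ S := by
        refine ⟨ht₀T, fun s hsT ht₀s => ?_⟩
        rcases le_or_gt s c with hsc | hsc
        · exact hTczero s ⟨hsT, ht₀s, hsc⟩
        · exact hczero s hsT hsc
      have := csInf_le hSbdd ht₀S
      rw [← hcdef] at this
      linarith
  -- conclude
  intro t ht
  exact hcS.2 t ht (by rw [hca]; exact (hTsub t ht).1)
end
end

section
/- There are no abnormal extremals for the basic problem of the calculus of variations on time scales, even with both endpoints fixed. Let y ∈ C¹_rd(𝕋;ℝⁿ), let ψ₀ ≥ 0 be a constant and let ψ : 𝕋 → ℝⁿ be delta differentiable at every t ∈ 𝕋^k. Suppose that for all t ∈ 𝕋^k: ψ^Δ(t) = −ψ₀·L_y(t, y(t), y^Δ(t)) and ψ₀·L_v(t, y(t), y^Δ(t)) + ψ(σ(t)) = 0, and that ψ₀ and ψ are not both identically zero on 𝕋. Then ψ₀ > 0. -/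
open Set Filter

noncomputable section

theorem no_abnormal_extremals_basic_problem
    {n : ℕ} (hn : 1 ≤ n)
    (T₀ : Set ℝ) (hT₀closed : IsClosed T₀)
    (a b : ℝ) (ha : a ∈ T₀) (hb : b ∈ T₀) (hab : a < b)
    (T : Set ℝ) (hT : T = Icc a b ∩ T₀)
    (hT3 : ∃ c ∈ T, c ≠ a ∧ c ≠ b)
    (L : ℝ → En n → En n → ℝ) (Ly Lv : ℝ → En n → En n → En n)
    (hLc : ContinuousOn (fun p : ℝ × En n × En n => L p.1 p.2.1 p.2.2)
      (T ×ˢ (univ : Set (En n × En n))))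
    (hLC2 : ∀ t ∈ T, ContDiff ℝ 2 (fun p : En n × En n => L t p.1 p.2))
    (hLy : ∀ t ∈ T, ∀ y v : En n, HasGradientAt (fun z => L t z v) (Ly t y v) y)
    (hLv : ∀ t ∈ T, ∀ y v : En n, HasGradientAt (fun z => L t y z) (Lv t y v) v)
    (hLyc : ContinuousOn (fun p : ℝ × En n × En n => Ly p.1 p.2.1 p.2.2)
      (T ×ˢ (univ : Set (En n × En n))))
    (hLvc : ContinuousOn (fun p : ℝ × En n × En n => Lv p.1 p.2.1 p.2.2)
      (T ×ˢ (univ : Set (En n × En n))))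
    (y yd : ℝ → En n) (hy : C1rd T y yd)
    (ψ0 : ℝ) (hψ0 : 0 ≤ ψ0) (ψ ψd : ℝ → En n)
    (hψdiff : ∀ t ∈ tsTk T, deltaDiffAt T ψ t (ψd t))
    (hadj : ∀ t ∈ tsTk T, ψd t = -(ψ0 • Ly t (y t) (yd t)))
    (hstat : ∀ t ∈ tsTk T, ψ0 • Lv t (y t) (yd t) + ψ (tsSigma T t) = 0)
    (hnt : ¬(ψ0 = 0 ∧ ∀ t ∈ T, ψ t = 0)) :
    0 < ψ0 := by
  rcases hψ0.lt_or_eq with h | h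
  · exact h
  exfalso
  apply hnt
  have hψ0z : ψ0 = 0 := h.symm
  subst hψ0z
  refine ⟨rfl, ?_⟩
  have hTsub : T ⊆ Icc a b := hT ▸ inter_subset_left
  have haT : a ∈ T := by rw [hT]; exact ⟨⟨le_refl a, hab.le⟩, ha⟩
  have hbT : b ∈ T := by rw [hT]; exact ⟨⟨hab.le, le_refl b⟩, hb⟩
  have hTclosed : IsClosed T := hT ▸ isClosed_Icc.inter hT₀closed
  have hsup : sSup T = b :=
    le_antisymm (csSup_le ⟨a, haT⟩ fun x hx => (hTsub hx).2)
      (le_csSup ⟨b, fun x hx => (hTsub hx).2⟩ hbT)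
  -- ψ(σ t) = 0 on T^k
  have hσ0 : ∀ t ∈ tsTk T, ψ (tsSigma T t) = 0 := by
    intro t ht
    have := hstat t ht
    simpa using this
  -- ψ t = 0 on T^k
  have heq : ∀ t ∈ tsTk T, ψ t = 0 := by
    intro t ht
    have htT : t ∈ T := ht.1
    have hd0 : ψd t = 0 := by simpa using hadj t ht
    have hdd := hψdiff t ht
    rw [hd0] at hdd
    have key : ∀ ε > 0, ‖ψ (tsSigma T t) - ψ t‖ ≤ ε * |tsSigma T t - t| := by
      intro ε hε
      obtain ⟨δ, hδ, hP⟩ := hdd ε hε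
      have := hP t ⟨htT, by constructor <;> linarith⟩
      simpa using this
    have hz : ψ (tsSigma T t) = ψ t := by
      rw [← sub_eq_zero]
      by_contra hne
      have hn : 0 < ‖ψ (tsSigma T t) - ψ t‖ := norm_pos_iff.mpr hne
      set N := ‖ψ (tsSigma T t) - ψ t‖ with hN
      set C := |tsSigma T t - t| with hC
      have hC0 : 0 ≤ C := abs_nonneg _
      have hε : (0:ℝ) < N / (2 * (C + 1)) := by positivity
      have hle := key _ hε
      rw [div_mul_eq_mul_div, le_div_iff₀ (by positivity)] at hle
      nlinarith
    rw [← hz]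
    exact hσ0 t ht
  intro t htT
  by_cases hcase : t ∈ tsTk T
  · exact heq t hcase
  · have htIoc : t ∈ Set.Ioc (tsRho T (sSup T)) (sSup T) := by
      by_contra hcon
      exact hcase ⟨htT, hcon⟩
    rw [hsup] at htIoc
    set r := tsRho T b with hr
    -- r is the sup of {s ∈ T | s < b}
    have hne : ({s | s ∈ T ∧ s < b}).Nonempty := ⟨a, haT, hab⟩
    have hrdef : r = sSup {s | s ∈ T ∧ s < b} := by
      rw [hr, tsRho, if_pos hne]
    have hbdd : BddAbove {s | s ∈ T ∧ s < b} := ⟨b, fun x hx => hx.2.le⟩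
    -- t = b
    have htb : t = b := by
      rcases lt_or_eq_of_le htIoc.2 with hlt | hE
      · exfalso
        have : t ≤ r := by
          rw [hrdef]
          exact le_csSup hbdd ⟨htT, hlt⟩
        exact absurd htIoc.1 (not_lt.mpr this)
      · exact hE
    -- r ∈ T
    have hrT : r ∈ T := by
      have := csSup_mem_closure hne hbdd
      rw [← hrdef] at this
      have h2 : closure {s | s ∈ T ∧ s < b} ⊆ T := by
        calc closure {s | s ∈ T ∧ s < b} ⊆ closure T := closure_mono fun x hx => hx.1
        _ = T := hTclosed.closure_eq
      exact h2 this
    have hrTk : r ∈ tsTk T := by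
      refine ⟨hrT, fun hmem => ?_⟩
      rw [hsup] at hmem
      exact absurd hmem.1 (lt_irrefl r)
    have hrb : r < b := htb ▸ htIoc.1
    -- σ r = b
    have hσr : tsSigma T r = b := by
      have hne2 : ({s | s ∈ T ∧ r < s}).Nonempty := ⟨b, hbT, hrb⟩
      rw [tsSigma, if_pos hne2]
      refine le_antisymm (csInf_le ⟨r, fun x hx => hx.2.le⟩ ⟨hbT, hrb⟩) ?_
      refine le_csInf hne2 fun s hs => ?_
      by_contra hsb
      push_neg at hsb
      have : s ≤ r := by
        rw [hrdef]; exact le_csSup hbdd ⟨hs.1, hsb⟩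
      exact absurd hs.2 (not_lt.mpr this)
    have := hσ0 r hrTk
    rw [htb]
    rwa [hσr] at this
end
end

section
/- Discrete higher-order Euler–Lagrange equation. Suppose y* : {a, a+1, …, b} → ℝⁿ is a local minimizer of 𝓛 with fixed boundary data: there is δ > 0 such that 𝓛[y*] ≤ 𝓛[y] for every y : {a, …, b} → ℝⁿ satisfying Δ^i y(a) = Δ^i y*(a) and Δ^i y(b−r+1) = Δ^i y*(b−r+1) for i = 0, …, r−1, and max_{a ≤ t ≤ b} ‖y(t) − y*(t)‖ < δ. For i = 0, …, r define g_i(s) = L_{u_i}(s, y*(s), Δy*(s), …, Δ^r y*(s)) for integers s with a ≤ s ≤ b − r. Then for every integer t with a ≤ t ≤ b − 2r: Δ^r g_r(t) + Σ_{i=0}^{r−1} (−1)^{r−i} (Δ^i g_i)(t + r − i) = 0. -/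
noncomputable section

/-- Forward difference operator on functions `ℤ → E`. -/
def discDelta {E : Type*} [AddCommGroup E] (f : ℤ → E) : ℤ → E := fun t => f (t + 1) - f t

open scoped RealInnerProductSpace

section Helpers

variable {E : Type*} [AddCommGroup E] [Module ℝ E]

omit [Module ℝ E] in
lemma dd_succ (i : ℕ) (f : ℤ → E) : discDelta^[i+1] f = discDelta^[i] (discDelta f) :=
  Function.iterate_succ_apply discDelta i f

omit [Module ℝ E] in
lemma dd_support (i : ℕ) (f : ℤ → E) (t : ℤ) (h : ∀ s, t ≤ s → s ≤ t + i → f s = 0) :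
    discDelta^[i] f t = 0 := by
  induction i generalizing f t with
  | zero => simpa using h t le_rfl (by simp)
  | succ i ih =>
    rw [dd_succ]
    refine ih _ _ fun s hs hs' => ?_
    have h1 : f s = 0 := h s hs (by push_cast at hs' ⊢; omega)
    have h2 : f (s+1) = 0 := h (s+1) (by omega) (by push_cast at hs' ⊢; omega)
    simp [discDelta, h1, h2]

lemma dd_add_smul (i : ℕ) (f g : ℤ → E) (c : ℝ) (t : ℤ) :
    discDelta^[i] (fun s => f s + c • g s) t = discDelta^[i] f t + c • discDelta^[i] g t := by
  induction i generalizing f g t with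
  | zero => simp
  | succ i ih =>
    rw [dd_succ, dd_succ, dd_succ]
    have : discDelta (fun s => f s + c • g s) = fun s => discDelta f s + c • discDelta g s := by
      funext s; simp [discDelta, smul_sub]; abel
    rw [this, ih]

/-- Shift operator as a linear endomorphism. -/
def shiftL : Module.End ℝ (ℤ → E) where
  toFun f := fun t => f (t + 1)
  map_add' _ _ := rfl
  map_smul' _ _ := rfl

/-- discDelta as a linear endomorphism. -/
def discDeltaL : Module.End ℝ (ℤ → E) where
  toFun := discDelta
  map_add' f g := by funext t; simp [discDelta]; abel
  map_smul' c f := by funext t; simp [discDelta, smul_sub]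

lemma shiftL_pow_apply (k : ℕ) (f : ℤ → E) (t : ℤ) :
    ((shiftL ^ k : Module.End ℝ (ℤ → E)) f) t = f (t + k) := by
  induction k generalizing f t with
  | zero => simp
  | succ k ih =>
    rw [pow_succ, Module.End.mul_apply, ih]
    show f (t + k + 1) = _
    congr 1; push_cast; ring

lemma D_eq : (shiftL - 1 : Module.End ℝ (ℤ → E)) = discDeltaL := by
  ext f t
  simp [shiftL, discDeltaL, discDelta]

lemma D_pow_apply (m : ℕ) (f : ℤ → E) :
    ((shiftL - 1 : Module.End ℝ (ℤ → E)) ^ m) f = discDelta^[m] f := by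
  rw [D_eq, Module.End.pow_apply]
  rfl

lemma dd_formula (m : ℕ) (f : ℤ → E) (t : ℤ) :
    discDelta^[m] f t
      = ∑ k ∈ Finset.range (m+1), ((-1:ℝ)^(m-k) * (m.choose k)) • f (t + k) := by
  have h : Commute (shiftL : Module.End ℝ (ℤ → E)) (-1) :=
    Commute.neg_one_right (shiftL : Module.End ℝ (ℤ → E))
  have hb := h.add_pow m
  rw [← D_pow_apply, sub_eq_add_neg, hb, LinearMap.sum_apply, Finset.sum_apply]
  refine Finset.sum_congr rfl fun k hk => ?_
  have hneg : ((-1 : Module.End ℝ (ℤ → E)) ^ (m - k)) ((m.choose k : ℕ) • f)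
      = ((-1:ℝ) ^ (m-k)) • ((m.choose k : ℕ) • f) := by
    have hone : (-1 : Module.End ℝ (ℤ → E)) = (-1:ℝ) • 1 := by
      ext g s; simp
    rw [hone, smul_pow, LinearMap.smul_apply, one_pow, Module.End.one_apply]
  rw [Module.End.mul_apply, Module.End.mul_apply, Module.End.natCast_apply, hneg,
    shiftL_pow_apply]
  show ((-1:ℝ) ^ (m-k)) • ((m.choose k : ℕ) • f (t + k)) = _
  simp [mul_smul, Nat.cast_smul_eq_nsmul]

lemma neg_one_pow_sub_real (i k : ℕ) (h : k ≤ i) :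
    (-1:ℝ)^(i-k) = (-1:ℝ)^i * (-1:ℝ)^k := by
  have h1 : (-1:ℝ)^(i-k) * (-1:ℝ)^k = (-1:ℝ)^i := by
    rw [← pow_add]; congr 1; omega
  have h2 : (-1:ℝ)^k * (-1:ℝ)^k = 1 := by
    rw [← pow_add]; exact Even.neg_one_pow ⟨k, rfl⟩
  linear_combination ((-1:ℝ)^k) * h1 - ((-1:ℝ)^(i-k)) * h2

end Helpers

/-- partial derivative of a scalar function on a pi type, evaluated on `Pi.single`. -/
lemma fderiv_single_eq {n m : ℕ} (F : (Fin m → En n) → ℝ)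
    {F' : (Fin m → En n) →L[ℝ] ℝ} {X : Fin m → En n}
    (hF : HasFDerivAt F F' X) (i : Fin m) {G : En n}
    (hG : HasGradientAt (fun z => F (Function.update X i z)) G (X i)) (e : En n) :
    F' (Pi.single i e) = ⟪G, e⟫ := by
  have hF0 : HasFDerivAt F F' (Function.update X i (X i)) := by
    rwa [Function.update_eq_self]
  have h1 : HasFDerivAt (fun z => F (Function.update X i z))
      (F'.comp (ContinuousLinearMap.pi ((Pi.single i (ContinuousLinearMap.id ℝ (En n)) : ∀ _ : Fin m, En n →L[ℝ] En n))))
      (X i) := hF0.comp (X i) (hasFDerivAt_update X (X i))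
  have h2 := hG.hasFDerivAt
  have h3 := h1.unique h2
  have hpi : (ContinuousLinearMap.pi ((Pi.single i (ContinuousLinearMap.id ℝ (En n)) : ∀ _ : Fin m, En n →L[ℝ] En n))) e
      = Pi.single i e := by
    funext j
    rcases eq_or_ne j i with rfl | hj
    · simp [ContinuousLinearMap.pi_apply]
    · simp [ContinuousLinearMap.pi_apply, Pi.single_apply, hj]
  calc F' (Pi.single i e) = (F'.comp (ContinuousLinearMap.pi
        ((Pi.single i (ContinuousLinearMap.id ℝ (En n)) : ∀ _ : Fin m, En n →L[ℝ] En n)))) e := by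
        rw [ContinuousLinearMap.comp_apply, hpi]
    _ = ⟪G, e⟫ := by rw [h3]; exact InnerProductSpace.toDual_apply_apply

theorem discrete_higher_order_euler_lagrange
    {n r : ℕ} (hn : 1 ≤ n) (hr : 1 ≤ r)
    (a b : ℤ) (hab : a + 2 * (r : ℤ) ≤ b)
    (L : ℤ → (Fin (r + 1) → En n) → ℝ)
    (Lu : ℕ → ℤ → (Fin (r + 1) → En n) → En n)
    (hLsmooth : ∀ t : ℤ, ContDiff ℝ (r + 1) (L t))
    (hLu : ∀ i : Fin (r + 1), ∀ t : ℤ, ∀ X : Fin (r + 1) → En n,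
      HasGradientAt (fun z => L t (Function.update X i z)) (Lu i.1 t X) (X i))
    (ys : ℤ → En n)
    (hmin : ∃ δ > 0, ∀ y : ℤ → En n,
      (∀ i < r, discDelta^[i] y a = discDelta^[i] ys a ∧
        discDelta^[i] y (b - (r : ℤ) + 1) = discDelta^[i] ys (b - (r : ℤ) + 1)) →
      (∀ t : ℤ, a ≤ t → t ≤ b → ‖y t - ys t‖ < δ) →
      (∑ t ∈ Finset.Icc a (b - (r : ℤ)), L t (fun i => discDelta^[i.1] ys t)) ≤
      (∑ t ∈ Finset.Icc a (b - (r : ℤ)), L t (fun i => discDelta^[i.1] y t))) :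
    ∀ t : ℤ, a ≤ t → t ≤ b - 2 * (r : ℤ) →
      (discDelta^[r] (fun s => Lu r s (fun i => discDelta^[i.1] ys s))) t
        + ∑ i ∈ Finset.range r, ((-1 : ℝ) ^ (r - i)) •
            (discDelta^[i] (fun s => Lu i s (fun j => discDelta^[j.1] ys s)))
              (t + ((r - i : ℕ) : ℤ)) = 0 := by
  intro t₀ ht₀a ht₀b
  set X : ℤ → Fin (r+1) → En n := fun s i => discDelta^[i.1] ys s with hX
  set g : ℕ → ℤ → En n := fun i s => Lu i s (X s) with hg
  set s₀ : ℤ := t₀ + r with hs₀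
  -- the key vanishing claim
  have key : (∑ i ∈ Finset.range (r+1),
      ((-1:ℝ)^i) • (discDelta^[i] (g i)) (s₀ - i)) = 0 := by
    set W : En n := ∑ i ∈ Finset.range (r+1),
      ((-1:ℝ)^i) • (discDelta^[i] (g i)) (s₀ - i) with hW
    have hWinner : ∀ e : En n, ⟪W, e⟫ = 0 := by
      intro e
      -- the variation η : point mass at s₀ in direction e
      set η : ℤ → En n := fun s => if s = s₀ then e else 0 with hη
      set V : ℤ → Fin (r+1) → En n := fun t i => discDelta^[i.1] η t with hV
      -- boundary vanishing of η's differences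
      have hband : ∀ i < r, discDelta^[i] η a = 0 := by
        intro i hi
        refine dd_support i η a fun s hs hs' => ?_
        have : s ≠ s₀ := by omega
        simp [hη, this]
      have hbbnd : ∀ i < r, discDelta^[i] η (b - (r:ℤ) + 1) = 0 := by
        intro i hi
        refine dd_support i η _ fun s hs hs' => ?_
        have : s ≠ s₀ := by omega
        simp [hη, this]
      -- first variation
      have hfv : (∑ t ∈ Finset.Icc a (b - (r:ℤ)),
          (fderiv ℝ (L t) (X t)) (V t)) = 0 := by
        set φ : ℝ → ℝ := fun ε => ∑ t ∈ Finset.Icc a (b - (r:ℤ)),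
          L t (X t + ε • V t) with hφ
        have hder : HasDerivAt φ (∑ t ∈ Finset.Icc a (b - (r:ℤ)),
            (fderiv ℝ (L t) (X t)) (V t)) 0 := by
          refine HasDerivAt.fun_sum fun t _ => ?_
          have hdiff : DifferentiableAt ℝ (L t) (X t) :=
            ((hLsmooth t).differentiable (by simp)).differentiableAt
          have hc : HasDerivAt (fun ε : ℝ => X t + ε • V t) (V t) 0 := by
            have h1 : HasDerivAt (fun ε : ℝ => ε • V t) ((1:ℝ) • V t) 0 :=
              (hasDerivAt_id (0:ℝ)).smul_const (V t)
            rw [one_smul] at h1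
            exact h1.const_add (X t)
          have hF : HasFDerivAt (L t) (fderiv ℝ (L t) (X t))
              ((fun ε : ℝ => X t + ε • V t) 0) := by
            simpa using hdiff.hasFDerivAt
          exact hF.comp_hasDerivAt 0 hc
        have hmin0 : IsLocalMin φ 0 := by
          obtain ⟨δ, hδpos, hm⟩ := hmin
          have hc : (0:ℝ) < δ / (‖e‖ + 1) := by positivity
          have hball : Metric.ball (0:ℝ) (δ / (‖e‖ + 1)) ∈ nhds (0:ℝ) :=
            Metric.ball_mem_nhds _ hc
          refine Filter.eventually_of_mem hball fun ε hε => ?_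
          have hεabs : |ε| < δ / (‖e‖ + 1) := by
            simpa [Real.dist_eq] using hε
          set y : ℤ → En n := fun s => ys s + ε • η s with hy
          have hXy : ∀ t : ℤ, (fun i : Fin (r+1) => discDelta^[i.1] y t) = X t + ε • V t := by
            intro t
            funext i
            simp only [hy, hX, hV]
            rw [dd_add_smul]
            rfl
          have hbd : ∀ i < r, discDelta^[i] y a = discDelta^[i] ys a ∧
              discDelta^[i] y (b - (r:ℤ) + 1) = discDelta^[i] ys (b - (r:ℤ) + 1) := by
            intro i hi
            constructor
            · rw [hy]
              rw [show (fun s => ys s + ε • η s) = fun s => ys s + ε • η s from rfl]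
              rw [dd_add_smul i ys η ε a, hband i hi, smul_zero, add_zero]
            · rw [hy, dd_add_smul i ys η ε _, hbbnd i hi, smul_zero, add_zero]
          have hclose : ∀ t : ℤ, a ≤ t → t ≤ b → ‖y t - ys t‖ < δ := by
            intro t _ _
            have : ‖y t - ys t‖ = |ε| * ‖η t‖ := by
              simp [hy, norm_smul]
            rw [this]
            have hηb : ‖η t‖ ≤ ‖e‖ := by
              rcases eq_or_ne t s₀ with rfl | h
              · simp [hη]
              · simp [hη, h, norm_nonneg]
            calc |ε| * ‖η t‖ ≤ |ε| * (‖e‖ + 1) := by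
                  apply mul_le_mul_of_nonneg_left _ (abs_nonneg ε)
                  linarith
              _ < (δ / (‖e‖ + 1)) * (‖e‖ + 1) := by
                  apply mul_lt_mul_of_pos_right hεabs
                  positivity
              _ = δ := by field_simp
          have := hm y hbd hclose
          have hφ0 : φ 0 = ∑ t ∈ Finset.Icc a (b - (r:ℤ)), L t (fun i => discDelta^[i.1] ys t) := by
            refine Finset.sum_congr rfl fun t _ => ?_
            congr 1
            funext i
            simp [hX]
          have hφε : φ ε = ∑ t ∈ Finset.Icc a (b - (r:ℤ)), L t (fun i => discDelta^[i.1] y t) := by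
            refine Finset.sum_congr rfl fun t _ => ?_
            congr 1
            exact (hXy t).symm
          rw [hφ0, hφε]
          exact this
        have := hmin0.deriv_eq_zero
        rw [hder.deriv] at this
        exact this
      -- rewrite the first variation as inner products
      have hfv2 : (∑ t ∈ Finset.Icc a (b - (r:ℤ)),
          ∑ i : Fin (r+1), ⟪g i.1 t, V t i⟫) = 0 := by
        rw [← hfv]
        refine Finset.sum_congr rfl fun t _ => ?_
        have hdiff : DifferentiableAt ℝ (L t) (X t) :=
          ((hLsmooth t).differentiable (by simp)).differentiableAt
        have hF := hdiff.hasFDerivAt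
        have hdec : V t = ∑ i : Fin (r+1), Pi.single i (V t i) :=
          (Finset.univ_sum_single (V t)).symm
        conv_rhs => rw [hdec, map_sum]
        refine Finset.sum_congr rfl fun i _ => ?_
        exact (fderiv_single_eq (L t) hF i (hLu i t (X t)) (V t i)).symm
      -- compute the sum over t for point-mass η
      have hcomb : (∑ t ∈ Finset.Icc a (b - (r:ℤ)), ∑ i : Fin (r+1), ⟪g i.1 t, V t i⟫)
          = ∑ i ∈ Finset.range (r+1), ((-1:ℝ)^i) * ⟪(discDelta^[i] (g i)) (s₀ - i), e⟫ := by
        rw [Finset.sum_comm]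
        rw [← Fin.sum_univ_eq_sum_range
          (fun i => ((-1:ℝ)^i) * ⟪(discDelta^[i] (g i)) (s₀ - i), e⟫)]
        refine Finset.sum_congr rfl fun i _ => ?_
        have hi : i.1 ≤ r := Nat.lt_succ_iff.mp i.isLt
        -- LHS : ∑ t, ⟪g i t, Δ^i η t⟫
        have hstep1 : (∑ t ∈ Finset.Icc a (b - (r:ℤ)), ⟪g i.1 t, V t i⟫)
            = ∑ k ∈ Finset.range (i.1+1),
                ((-1:ℝ)^(i.1-k) * ((i.1).choose k)) * ⟪g i.1 (s₀ - k), e⟫ := by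
          have : ∀ t : ℤ, ⟪g i.1 t, V t i⟫
              = ∑ k ∈ Finset.range (i.1+1),
                  (if t = s₀ - k then ((-1:ℝ)^(i.1-k) * ((i.1).choose k)) * ⟪g i.1 t, e⟫ else 0) := by
            intro t
            simp only [hV]
            rw [dd_formula i.1 η t, inner_sum]
            refine Finset.sum_congr rfl fun k hk => ?_
            rw [real_inner_smul_right]
            rcases eq_or_ne t (s₀ - k) with rfl | h
            · have : s₀ - (k:ℤ) + k = s₀ := by ring
              simp [hη, this]
            · have : t + (k:ℤ) ≠ s₀ := by omega
              simp [hη, this, h]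
          simp only [this]
          rw [Finset.sum_comm]
          refine Finset.sum_congr rfl fun k hk => ?_
          have hk' : k ≤ i.1 := by
            simpa [Nat.lt_succ_iff] using hk
          have hmem : s₀ - (k:ℤ) ∈ Finset.Icc a (b - (r:ℤ)) := by
            rw [Finset.mem_Icc]
            have hkr : (k:ℤ) ≤ r := by exact_mod_cast hk'.trans hi
            omega
          rw [Finset.sum_ite_eq' (Finset.Icc a (b - (r:ℤ))) (s₀ - (k:ℤ))
            (fun t => ((-1:ℝ)^(i.1-k) * ((i.1).choose k)) * ⟪g i.1 t, e⟫), if_pos hmem]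
        rw [hstep1]
        -- RHS : (-1)^i * ⟪Δ^i g_i (s₀ - i), e⟫
        have hstep2 : ((-1:ℝ)^i.1) * ⟪(discDelta^[i.1] (g i.1)) (s₀ - i.1), e⟫
            = ∑ k ∈ Finset.range (i.1+1),
                ((-1:ℝ)^i.1 * ((-1:ℝ)^(i.1-k) * ((i.1).choose k))) * ⟪g i.1 (s₀ - i.1 + k), e⟫ := by
          rw [dd_formula i.1 (g i.1) (s₀ - i.1), sum_inner, Finset.mul_sum]
          refine Finset.sum_congr rfl fun k hk => ?_
          rw [real_inner_smul_left]
          ring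
        rw [hstep2]
        rw [← Finset.sum_range_reflect
          (fun k => ((-1:ℝ)^i.1 * ((-1:ℝ)^(i.1-k) * ((i.1).choose k))) * ⟪g i.1 (s₀ - i.1 + k), e⟫) (i.1+1)]
        refine Finset.sum_congr rfl fun k hk => ?_
        have hk' : k ≤ i.1 := by simpa [Nat.lt_succ_iff] using hk
        have e1 : i.1 + 1 - 1 - k = i.1 - k := by omega
        rw [e1]
        have e2 : s₀ - (i.1:ℤ) + ((i.1 - k : ℕ):ℤ) = s₀ - k := by
          have : ((i.1 - k : ℕ):ℤ) = (i.1:ℤ) - k := by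
            push_cast [Nat.cast_sub hk']; ring
          omega
        rw [e2]
        have e3 : i.1 - (i.1 - k) = k := by omega
        rw [e3]
        have e4 : (i.1).choose (i.1 - k) = (i.1).choose k := Nat.choose_symm hk'
        rw [e4, neg_one_pow_sub_real i.1 k hk']
        ring
      rw [hfv2] at hcomb
      rw [hW, sum_inner]
      have hsm : ∀ i ∈ Finset.range (r+1),
          ⟪((-1:ℝ)^i) • (discDelta^[i] (g i)) (s₀ - i), e⟫
            = ((-1:ℝ)^i) * ⟪(discDelta^[i] (g i)) (s₀ - i), e⟫ := fun i _ =>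
        real_inner_smul_left _ _ _
      rw [Finset.sum_congr rfl hsm]
      exact hcomb.symm
    have := ext_inner_right ℝ (x := W) (y := 0) ?_
    · exact this
    · intro v
      rw [hWinner v, inner_zero_left]
  -- derive the target from key
  show (discDelta^[r] (g r)) t₀
      + ∑ i ∈ Finset.range r, ((-1 : ℝ) ^ (r - i)) •
          (discDelta^[i] (g i)) (t₀ + ((r - i : ℕ) : ℤ)) = 0
  have key' := congrArg (fun w : En n => ((-1:ℝ)^r) • w) key
  simp only [smul_zero] at key'
  rw [Finset.smul_sum, Finset.sum_range_succ] at key'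
  have hlast : ((-1:ℝ)^r) • (((-1:ℝ)^r) • (discDelta^[r] (g r)) (s₀ - (r:ℤ)))
      = (discDelta^[r] (g r)) t₀ := by
    rw [smul_smul, ← pow_add]
    have h1 : ((-1:ℝ)^(r+r)) = 1 := Even.neg_one_pow ⟨r, rfl⟩
    have h2 : s₀ - (r:ℤ) = t₀ := by omega
    rw [h1, h2, one_smul]
  have hterm : ∀ i ∈ Finset.range r,
      ((-1:ℝ)^r) • (((-1:ℝ)^i) • (discDelta^[i] (g i)) (s₀ - (i:ℤ)))
        = ((-1:ℝ)^(r-i)) • (discDelta^[i] (g i)) (t₀ + ((r - i : ℕ) : ℤ)) := by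
    intro i hi
    have hi' : i ≤ r := le_of_lt (Finset.mem_range.mp hi)
    have h1 : s₀ - (i:ℤ) = t₀ + ((r - i : ℕ) : ℤ) := by
      have : ((r - i : ℕ) : ℤ) = (r:ℤ) - (i:ℤ) := by
        push_cast [Nat.cast_sub hi']; ring
      omega
    rw [h1, smul_smul, ← neg_one_pow_sub_real r i hi']
  rw [Finset.sum_congr rfl hterm, hlast] at key'
  rw [add_comm] at key'
  exact key'
end
end

section
/- Dubois-Reymond lemma on time scales. Let g : 𝕋^k → ℝⁿ be rd-continuous. Then ∫_a^b ⟨g(t), η^Δ(t)⟩ Δt = 0 for every η ∈ C¹_rd(𝕋;ℝⁿ) with η(a) = η(b) = 0 if and only if there exists c ∈ ℝⁿ such that g(t) = c for all t ∈ 𝕋^k. -/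
open Set Filter

noncomputable section

section Lemmas

variable {E F : Type*} [NormedAddCommGroup E] [NormedSpace ℝ E]
  [NormedAddCommGroup F] [NormedSpace ℝ F]

theorem deltaDiffAt.sub {S : Set ℝ} {f g : ℝ → E} {t : ℝ} {d e : E}
    (hf : deltaDiffAt S f t d) (hg : deltaDiffAt S g t e) :
    deltaDiffAt S (fun x => f x - g x) t (d - e) := by
  intro ε hε
  obtain ⟨δ1, hδ1, h1⟩ := hf (ε / 2) (by positivity)
  obtain ⟨δ2, hδ2, h2⟩ := hg (ε / 2) (by positivity)
  refine ⟨min δ1 δ2, by positivity, fun s hs => ?_⟩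
  have hs1 : s ∈ S ∩ Set.Ioo (t - δ1) (t + δ1) :=
    ⟨hs.1, lt_of_le_of_lt (by simp [min_le_left]; linarith [min_le_left δ1 δ2]) hs.2.1,
      lt_of_lt_of_le hs.2.2 (by linarith [min_le_left δ1 δ2])⟩
  have hs2 : s ∈ S ∩ Set.Ioo (t - δ2) (t + δ2) :=
    ⟨hs.1, lt_of_le_of_lt (by linarith [min_le_right δ1 δ2]) hs.2.1,
      lt_of_lt_of_le hs.2.2 (by linarith [min_le_right δ1 δ2])⟩
  have e1 := h1 s hs1
  have e2 := h2 s hs2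
  set σ := tsSigma S t
  have : f σ - g σ - (f s - g s) - (σ - s) • (d - e)
      = (f σ - f s - (σ - s) • d) - (g σ - g s - (σ - s) • e) := by
    rw [smul_sub]; abel
  rw [this]
  calc ‖(f σ - f s - (σ - s) • d) - (g σ - g s - (σ - s) • e)‖
      ≤ ‖f σ - f s - (σ - s) • d‖ + ‖g σ - g s - (σ - s) • e‖ := norm_sub_le _ _
    _ ≤ ε / 2 * |σ - s| + ε / 2 * |σ - s| := add_le_add e1 e2
    _ = ε * |σ - s| := by ring

theorem deltaDiffAt.clm {S : Set ℝ} {f : ℝ → E} {t : ℝ} {d : E}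
    (hf : deltaDiffAt S f t d) (L : E →L[ℝ] F) :
    deltaDiffAt S (fun x => L (f x)) t (L d) := by
  intro ε hε
  obtain ⟨δ, hδ, h⟩ := hf (ε / (‖L‖ + 1)) (by positivity)
  refine ⟨δ, hδ, fun s hs => ?_⟩
  have h' := h s hs
  set σ := tsSigma S t
  have heq : L (f σ) - L (f s) - (σ - s) • L d = L (f σ - f s - (σ - s) • d) := by
    rw [map_sub, map_sub, map_smul]
  rw [heq]
  calc ‖L (f σ - f s - (σ - s) • d)‖ ≤ ‖L‖ * ‖f σ - f s - (σ - s) • d‖ := L.le_opNorm _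
    _ ≤ ‖L‖ * (ε / (‖L‖ + 1) * |σ - s|) := by
        exact mul_le_mul_of_nonneg_left h' (norm_nonneg _)
    _ ≤ ε * |σ - s| := by
        have h1 : (0:ℝ) ≤ ‖L‖ := norm_nonneg _
        have h2 : (0:ℝ) ≤ |σ - s| := abs_nonneg _
        have h3 : ‖L‖ / (‖L‖ + 1) ≤ 1 := by
          rw [div_le_one (by positivity)]; linarith
        calc ‖L‖ * (ε / (‖L‖ + 1) * |σ - s|) = (‖L‖ / (‖L‖ + 1)) * (ε * |σ - s|) := by ring
          _ ≤ 1 * (ε * |σ - s|) := by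
              exact mul_le_mul_of_nonneg_right h3 (by positivity)
          _ = ε * |σ - s| := one_mul _

theorem deltaDiffAt_linear {S : Set ℝ} {t a : ℝ} (c : E) :
    deltaDiffAt S (fun x => (x - a) • c) t c := by
  intro ε hε
  refine ⟨1, one_pos, fun s _ => ?_⟩
  have : (tsSigma S t - a) • c - (s - a) • c - (tsSigma S t - s) • c = 0 := by
    rw [← sub_smul, ← sub_smul]; ring_nf; simp
  rw [this, norm_zero]
  positivity

theorem RdContinuousOn.compCont {S : Set ℝ} {f : ℝ → E}
    (hf : RdContinuousOn S f) {φ : E → F} (hφ : Continuous φ) :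
    RdContinuousOn S (fun x => φ (f x)) := by
  intro t ht
  obtain ⟨h1, h2⟩ := hf t ht
  refine ⟨fun h => hφ.continuousAt.comp_continuousWithinAt (h1 h), fun h => ?_⟩
  obtain ⟨l, hl⟩ := h2 h
  exact ⟨φ l, ((hφ.tendsto l).comp hl)⟩

end Lemmas

section Structural

set_option linter.unusedSectionVars false

variable {T : Set ℝ} {a b : ℝ}
variable (hcl : IsClosed T) (hsub : T ⊆ Icc a b) (ha : a ∈ T) (hb : b ∈ T) (hab : a < b)

include hsub in
theorem ts_bddAbove : BddAbove T := ⟨b, fun x hx => (hsub hx).2⟩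

include hsub in
theorem ts_bddBelow : BddBelow T := ⟨a, fun x hx => (hsub hx).1⟩

include hsub hb ha in
theorem ts_sSup_eq : sSup T = b :=
  le_antisymm (csSup_le ⟨a, ha⟩ fun x hx => (hsub hx).2) (le_csSup (ts_bddAbove hsub) hb)

include ha hab in
theorem ts_rhoB_nonempty : ({s | s ∈ T ∧ s < b}).Nonempty := ⟨a, ha, hab⟩

include ha hab in
theorem ts_rhoB_eq : tsRho T b = sSup {s | s ∈ T ∧ s < b} := by
  rw [tsRho, if_pos (ts_rhoB_nonempty ha hab)]

include hcl hsub ha hab in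
theorem ts_rhoB_mem : tsRho T b ∈ T := by
  rw [ts_rhoB_eq ha hab]
  have h1 : sSup {s | s ∈ T ∧ s < b} ∈ closure {s | s ∈ T ∧ s < b} :=
    csSup_mem_closure (ts_rhoB_nonempty ha hab)
      ⟨b, fun x hx => (hsub hx.1).2⟩
  have h2 : closure {s | s ∈ T ∧ s < b} ⊆ closure T :=
    closure_mono fun x hx => hx.1
  rw [hcl.closure_eq] at h2
  exact h2 h1

include ha hab in
theorem ts_rhoB_le : tsRho T b ≤ b := by
  rw [ts_rhoB_eq ha hab]
  exact csSup_le (ts_rhoB_nonempty ha hab) fun x hx => hx.2.le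

include hsub ha hab in
theorem ts_a_le_rhoB : a ≤ tsRho T b := by
  rw [ts_rhoB_eq ha hab]
  exact le_csSup ⟨b, fun x hx => (hsub hx.1).2⟩ ⟨ha, hab⟩

include hsub ha hab in
theorem ts_notMem_Ioo_rhoB {x : ℝ} (hx : x ∈ T) : ¬(tsRho T b < x ∧ x < b) := by
  rintro ⟨h1, h2⟩
  have : x ≤ tsRho T b := by
    rw [ts_rhoB_eq ha hab]
    exact le_csSup ⟨b, fun y hy => (hsub hy.1).2⟩ ⟨hx, h2⟩
  linarith

include hsub ha hb in
theorem ts_tk_eq : tsTk T = T \ Ioc (tsRho T b) b := by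
  rw [tsTk, ts_sSup_eq hsub ha hb]

include hsub ha hb hab in
theorem ts_mem_tk_of_lt {x : ℝ} (hx : x ∈ T) (hxb : x < b) : x ∈ tsTk T := by
  rw [ts_tk_eq hsub ha hb]
  refine ⟨hx, fun hIoc => ?_⟩
  exact ts_notMem_Ioo_rhoB hsub ha hab hx ⟨hIoc.1, hxb⟩

theorem ts_tk_subset : tsTk T ⊆ T := fun _ hx => hx.1

include hsub ha hb in
theorem ts_le_rhoB_of_tk_ne {x : ℝ} (hx : x ∈ tsTk T) (hxb : x ≠ b) : x ≤ tsRho T b := by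
  rw [ts_tk_eq hsub ha hb] at hx
  by_contra h
  push_neg at h
  exact hx.2 ⟨h, (hsub hx.1).2⟩

include hsub ha hb in
theorem ts_tk_eq_self (hρ : tsRho T b = b) : tsTk T = T := by
  rw [ts_tk_eq hsub ha hb, hρ, Ioc_self, diff_empty]

include hsub ha hb hab in
theorem ts_rhoB_eq_of_b_mem_tk (hbk : b ∈ tsTk T) : tsRho T b = b := by
  rw [ts_tk_eq hsub ha hb] at hbk
  by_contra h
  have hlt : tsRho T b < b := lt_of_le_of_ne (ts_rhoB_le ha hab) h
  exact hbk.2 ⟨hlt, le_refl b⟩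

-- sigma lemmas
include hcl in
theorem ts_sigma_mem {t : ℝ} (ht : t ∈ T) : tsSigma T t ∈ T := by
  rw [tsSigma]
  split_ifs with h
  · have h1 : sInf {s | s ∈ T ∧ t < s} ∈ closure {s | s ∈ T ∧ t < s} :=
      csInf_mem_closure h ⟨t, fun x hx => hx.2.le⟩
    have h2 : closure {s | s ∈ T ∧ t < s} ⊆ closure T := closure_mono fun x hx => hx.1
    rw [hcl.closure_eq] at h2
    exact h2 h1
  · exact ht

theorem ts_le_sigma (t : ℝ) : t ≤ tsSigma T t := by
  rw [tsSigma]
  split_ifs with h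
  · exact le_csInf h fun x hx => hx.2.le
  · exact le_refl t

include hcl hsub in
theorem ts_sigma_le {t : ℝ} (ht : t ∈ T) : tsSigma T t ≤ b := (hsub (ts_sigma_mem hcl ht)).2

include hcl hsub in
theorem ts_a_le_sigma {t : ℝ} (ht : t ∈ T) : a ≤ tsSigma T t := (hsub (ts_sigma_mem hcl ht)).1

theorem ts_notMem_Ioo_sigma {t x : ℝ} (hx : x ∈ T) : ¬(t < x ∧ x < tsSigma T t) := by
  rintro ⟨h1, h2⟩
  have hne : ({s | s ∈ T ∧ t < s}).Nonempty := ⟨x, hx, h1⟩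
  rw [tsSigma, if_pos hne] at h2
  exact absurd (csInf_le ⟨t, fun y hy => hy.2.le⟩ (⟨hx, h1⟩ : x ∈ {s | s ∈ T ∧ t < s})) (not_le.2 h2)

include hcl hsub ha hb hab in
theorem ts_sigma_rhoB (hρ : tsRho T b < b) : tsSigma T (tsRho T b) = b := by
  have hAset : {s | s ∈ T ∧ tsRho T b < s} = {b} := by
    ext x
    constructor
    · rintro ⟨hxT, hx⟩
      have hxb : x ≤ b := (hsub hxT).2
      rcases eq_or_lt_of_le hxb with h | h
      · exact h
      · exact absurd ⟨hx, h⟩ (ts_notMem_Ioo_rhoB hsub ha hab hxT)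
    · rintro rfl
      exact ⟨hb, hρ⟩
  rw [tsSigma, hAset, if_pos ⟨b, rfl⟩, csInf_singleton]

include hcl hsub ha hb hab in
theorem ts_lt_rhoB_of_tk_rd {t : ℝ} (ht : t ∈ tsTk T) (hσ : tsSigma T t = t)
    (hρ : tsRho T b < b) : t < tsRho T b := by
  have htb : t ≠ b := by
    rintro rfl
    exact absurd (ts_rhoB_eq_of_b_mem_tk hsub ha hb hab ht) (ne_of_lt hρ)
  have hle : t ≤ tsRho T b := ts_le_rhoB_of_tk_ne hsub ha hb ht htb
  rcases eq_or_lt_of_le hle with h | h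
  · exfalso
    have h3 := ts_sigma_rhoB hcl hsub ha hb hab hρ
    rw [← h, hσ] at h3
    rw [← h] at hρ
    exact absurd h3 (ne_of_lt hρ)
  · exact h

include hcl hsub ha hb hab in
theorem ts_sigma_tk_eq {t : ℝ} (ht : t ∈ tsTk T) (hσ : tsSigma T t = t) :
    tsSigma (tsTk T) t = t := by
  rcases eq_or_lt_of_le (ts_rhoB_le ha hab) with hρ | hρ
  · rw [ts_tk_eq_self hsub ha hb hρ]; exact hσ
  · have htρ : t < tsRho T b := ts_lt_rhoB_of_tk_rd hcl hsub ha hb hab ht hσ hρ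
    -- set of T-points above t
    have hAne : ({s | s ∈ T ∧ t < s}).Nonempty := ⟨b, hb, lt_trans htρ hρ⟩
    have hInfA : sInf {s | s ∈ T ∧ t < s} = t := by
      rw [tsSigma, if_pos hAne] at hσ; exact hσ
    have hBddA : BddBelow {s | s ∈ T ∧ t < s} := ⟨t, fun x hx => hx.2.le⟩
    -- the Tk-set above t is nonempty
    have hBne : ({s | s ∈ tsTk T ∧ t < s}).Nonempty := by
      have : sInf {s | s ∈ T ∧ t < s} < tsRho T b := by rw [hInfA]; exact htρ
      obtain ⟨z, hz, hzlt⟩ := (csInf_lt_iff hBddA hAne).1 this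
      exact ⟨z, ts_mem_tk_of_lt hsub ha hb hab hz.1 (lt_trans hzlt hρ), hz.2⟩
    rw [tsSigma, if_pos hBne]
    refine le_antisymm ?_ (le_csInf hBne fun x hx => hx.2.le)
    refine le_of_forall_pos_le_add fun ε hε => ?_
    have hlt : sInf {s | s ∈ T ∧ t < s} < min (t + ε) (tsRho T b) := by
      rw [hInfA]; exact lt_min (by linarith) htρ
    obtain ⟨z, hz, hzlt⟩ := (csInf_lt_iff hBddA hAne).1 hlt
    have hzTk : z ∈ tsTk T :=
      ts_mem_tk_of_lt hsub ha hb hab hz.1 (lt_trans (lt_of_lt_of_le hzlt (min_le_right _ _)) hρ)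
    calc sInf {s | s ∈ tsTk T ∧ t < s} ≤ z :=
          csInf_le ⟨t, fun x hx => hx.2.le⟩ ⟨hzTk, hz.2⟩
      _ ≤ t + ε := le_of_lt (lt_of_lt_of_le hzlt (min_le_left _ _))

include hsub ha hb hab in
theorem ts_tk_inter_Iio {t : ℝ} (htb : t ≤ b) :
    {s | s ∈ tsTk T ∧ s < t} = {s | s ∈ T ∧ s < t} := by
  ext x
  constructor
  · rintro ⟨hx, hxt⟩; exact ⟨hx.1, hxt⟩
  · rintro ⟨hx, hxt⟩
    exact ⟨ts_mem_tk_of_lt hsub ha hb hab hx (lt_of_lt_of_le hxt htb), hxt⟩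

include hsub ha hb hab in
theorem ts_rho_tk_eq {t : ℝ} (htb : t ≤ b) : tsRho (tsTk T) t = tsRho T t := by
  rw [tsRho, tsRho, ts_tk_inter_Iio hsub ha hb hab htb]

theorem ts_rho_lb {u x : ℝ} (hx : x ∈ T) (hxu : x < u) (hbdd : BddAbove T) :
    x ≤ tsRho T u := by
  rw [tsRho, if_pos ⟨x, hx, hxu⟩]
  exact le_csSup (hbdd.mono fun y hy => hy.1) ⟨hx, hxu⟩

theorem ts_rho_le {u : ℝ} : tsRho T u ≤ u := by
  rw [tsRho]
  split_ifs with h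
  · exact csSup_le h fun x hx => hx.2.le
  · exact le_refl u

include hcl in
theorem ts_rho_mem {u : ℝ} (hne : ({s | s ∈ T ∧ s < u}).Nonempty) (hbdd : BddAbove T) :
    tsRho T u ∈ T := by
  rw [tsRho, if_pos hne]
  have h1 : sSup {s | s ∈ T ∧ s < u} ∈ closure {s | s ∈ T ∧ s < u} :=
    csSup_mem_closure hne (hbdd.mono fun y hy => hy.1)
  have h2 : closure {s | s ∈ T ∧ s < u} ⊆ closure T := closure_mono fun x hx => hx.1
  rw [hcl.closure_eq] at h2
  exact h2 h1

end Structural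

-- τ : the "largest time-scale point ≤ u" map, and the extension f̂ = f ∘ τ
def dbrTau (T : Set ℝ) (a u : ℝ) : ℝ := sSup (T ∩ Iic (max a u))

section Tau

set_option linter.unusedSectionVars false

variable {T : Set ℝ} {a b : ℝ}
variable (hcl : IsClosed T) (hsub : T ⊆ Icc a b) (ha : a ∈ T) (hb : b ∈ T) (hab : a < b)

include hcl hsub ha in
theorem tau_mem (u : ℝ) : dbrTau T a u ∈ T := by
  have h : sSup (T ∩ Iic (max a u)) ∈ T ∩ Iic (max a u) :=
    (hcl.inter isClosed_Iic).csSup_mem ⟨a, ha, mem_Iic.2 (le_max_left _ _)⟩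
      ((ts_bddAbove hsub).mono inter_subset_left)
  exact h.1

include hsub ha in
theorem tau_le (u : ℝ) : dbrTau T a u ≤ max a u :=
  csSup_le ⟨a, ha, mem_Iic.2 (le_max_left _ _)⟩ (fun x hx => hx.2)

include hsub ha in
theorem tau_le' (u : ℝ) (hu : a ≤ u) : dbrTau T a u ≤ u := by
  have := tau_le hsub ha (T := T) u
  rwa [max_eq_right hu] at this

include hsub in
theorem le_tau {x u : ℝ} (hx : x ∈ T) (hxu : x ≤ u) : x ≤ dbrTau T a u :=
  le_csSup ((ts_bddAbove hsub).mono inter_subset_left)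
    ⟨hx, mem_Iic.2 (le_trans hxu (le_max_right _ _))⟩

include hsub in
theorem le_tau' {x u : ℝ} (hx : x ∈ T) (hxu : x ≤ max a u) : x ≤ dbrTau T a u :=
  le_csSup ((ts_bddAbove hsub).mono inter_subset_left) ⟨hx, mem_Iic.2 hxu⟩

include hsub ha in
theorem tau_of_le_a {v : ℝ} (hv : v ≤ a) : dbrTau T a v = a := by
  rw [dbrTau, max_eq_left hv]
  have h : T ∩ Iic a = {a} := by
    apply Subset.antisymm
    · rintro x ⟨hxT, hx⟩
      exact le_antisymm hx (hsub hxT).1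
    · intro x hx
      rw [mem_singleton_iff.1 hx]
      exact ⟨ha, le_refl a⟩
  rw [h, csSup_singleton]

include hsub ha in
theorem tau_eq_self {t : ℝ} (ht : t ∈ T) (hat : a ≤ t) : dbrTau T a t = t :=
  le_antisymm (tau_le' hsub ha t hat) (le_tau hsub ht (le_refl t))

include hsub ha in
theorem tau_eq_of_Ico {t v : ℝ} (ht : t ∈ T) (hat : a ≤ t) (h1 : t ≤ v)
    (h2 : v < tsSigma T t) : dbrTau T a v = t := by
  refine le_antisymm ?_ (le_tau hsub ht h1)
  refine csSup_le ⟨t, ht, mem_Iic.2 (le_trans h1 (le_max_right _ _))⟩ fun x hx => ?_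
  by_contra hcon
  push_neg at hcon
  have hxv : x ≤ v := le_trans hx.2 (max_le (le_trans hat h1) (le_refl v))
  exact ts_notMem_Ioo_sigma hx.1 ⟨hcon, lt_of_le_of_lt hxv h2⟩

end Tau

-- the extension f̂ is right continuous
section Fhat

set_option linter.unusedSectionVars false

open MeasureTheory

variable {E : Type*} [NormedAddCommGroup E] [NormedSpace ℝ E]
variable {T : Set ℝ} {a b : ℝ}
variable (hcl : IsClosed T) (hsub : T ⊆ Icc a b) (ha : a ∈ T) (hb : b ∈ T) (hab : a < b)

include hcl hsub ha hb hab in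
theorem exists_kappa {t : ℝ} (htk : t ∈ tsTk T) (hσ : tsSigma T t = t) :
    ∃ κ > 0, ∀ z ∈ T, z < t + κ → z ∈ tsTk T := by
  rcases eq_or_lt_of_le (ts_rhoB_le ha hab) with hρ | hρ
  · exact ⟨1, one_pos, fun z hz _ => (ts_tk_eq_self hsub ha hb hρ).symm ▸ hz⟩
  · have htρ : t < tsRho T b := ts_lt_rhoB_of_tk_rd hcl hsub ha hb hab htk hσ hρ
    refine ⟨tsRho T b - t, by linarith, fun z hz hzlt => ?_⟩
    exact ts_mem_tk_of_lt hsub ha hb hab hz (by linarith)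

include hcl hsub ha hb hab in
theorem fhat_rightCont {f : ℝ → E} (hf : RdContinuousOn (tsTk T) f) (u : ℝ) :
    Tendsto (fun v => f (dbrTau T a v)) (nhdsWithin u (Ici u))
      (nhds (f (dbrTau T a u))) := by
  have haIcc : a ∈ Icc a b := ⟨le_refl a, hab.le⟩
  rcases lt_or_ge u a with hua | hau
  · -- u < a : constant  f a  on Iio a
    have hconst : ∀ v, v < a → dbrTau T a v = a := fun v hv => by
      have : max a v = a := max_eq_left hv.le
      rw [dbrTau, this]
      have : T ∩ Iic a = {a} := by
        apply Subset.antisymm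
        · rintro x ⟨hxT, hx⟩
          exact le_antisymm hx (hsub hxT).1
        · intro x hx
          rw [mem_singleton_iff.1 hx]
          exact ⟨ha, le_refl a⟩
      rw [this, csSup_singleton]
    have hval : dbrTau T a u = a := hconst u hua
    rw [hval]
    refine Tendsto.congr' (f₁ := fun _ => f a) ?_ tendsto_const_nhds
    filter_upwards [mem_nhdsWithin_of_mem_nhds (Iio_mem_nhds hua)] with v hv
    rw [hconst v hv]
  rcases le_or_gt b u with hbu | hub
  · -- u ≥ b : constant f b on Ici b
    have hconst : ∀ v, b ≤ v → dbrTau T a v = b := fun v hv => by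
      refine le_antisymm ?_ (le_tau hsub hb hv)
      exact csSup_le ⟨a, ha, mem_Iic.2 (le_max_left _ _)⟩ fun x hx => (hsub hx.1).2
    rw [hconst u hbu]
    refine Tendsto.congr' (f₁ := fun _ => f b) ?_ tendsto_const_nhds
    filter_upwards [self_mem_nhdsWithin] with v hv
    rw [hconst v (le_trans hbu hv)]
  -- now a ≤ u < b
  by_cases huT : u ∈ T
  · have hσu := ts_le_sigma (T := T) u
    rcases eq_or_lt_of_le hσu with hrd | hrs
    · -- right-dense
      have hutk : u ∈ tsTk T := ts_mem_tk_of_lt hsub ha hb hab huT hub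
      have hcont : ContinuousWithinAt f (tsTk T) u :=
        (hf u hutk).1 (ts_sigma_tk_eq hcl hsub ha hb hab hutk hrd.symm)
      obtain ⟨κ, hκ, hκT⟩ := exists_kappa hcl hsub ha hb hab hutk hrd.symm
      have htau_self : dbrTau T a u = u := tau_eq_self hsub ha huT hau
      rw [htau_self]
      apply hcont.tendsto.comp
      apply tendsto_nhdsWithin_of_tendsto_nhds_of_eventually_within
      · -- Tendsto τ (𝓝[≥] u) (𝓝 u)
        apply tendsto_of_tendsto_of_tendsto_of_le_of_le' tendsto_const_nhds
          (tendsto_id.mono_left nhdsWithin_le_nhds)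
        · filter_upwards [self_mem_nhdsWithin] with v hv
          exact le_tau hsub huT hv
        · filter_upwards [self_mem_nhdsWithin] with v hv
          exact tau_le' hsub ha v (le_trans hau hv)
      · -- eventually τ v ∈ tsTk T
        filter_upwards [Ico_mem_nhdsGE (by linarith : u < u + κ)] with v hv
        exact hκT _ (tau_mem hcl hsub ha v)
          (lt_of_le_of_lt (tau_le' hsub ha v (le_trans hau hv.1)) hv.2)
    · -- right-scattered : constant f u on Ico u (σ u)
      have hconst : ∀ v ∈ Ico u (tsSigma T u), dbrTau T a v = u := fun v hv =>
        tau_eq_of_Ico hsub ha huT hau hv.1 hv.2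
      have hval : dbrTau T a u = u := tau_eq_self hsub ha huT hau
      rw [hval]
      refine Tendsto.congr' (f₁ := fun _ => f u) ?_ tendsto_const_nhds
      filter_upwards [Ico_mem_nhdsGE hrs] with v hv
      rw [hconst v hv]
  · -- u ∉ T : u is inside a gap (τ u, σ (τ u))
    set t := dbrTau T a u with htdef
    have htT : t ∈ T := tau_mem hcl hsub ha u
    have htu : t < u := lt_of_le_of_ne (tau_le' hsub ha u hau) (fun h => huT (h ▸ htT))
    have huσ : u < tsSigma T t := by
      have hne : ({s | s ∈ T ∧ t < s}).Nonempty := ⟨b, hb, lt_of_lt_of_le htu hub.le⟩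
      have h1 : u ≤ tsSigma T t := by
        rw [tsSigma, if_pos hne]
        refine le_csInf hne fun x hx => ?_
        by_contra hcon
        push_neg at hcon
        have : x ≤ dbrTau T a u := le_tau hsub hx.1 hcon.le
        exact absurd this (not_le.2 hx.2)
      rcases eq_or_lt_of_le h1 with h | h
      · exact absurd (h ▸ ts_sigma_mem hcl htT) huT
      · exact h
    refine Tendsto.congr' (f₁ := fun _ => f t) ?_ tendsto_const_nhds
    filter_upwards [mem_nhdsWithin_of_mem_nhds (Ioo_mem_nhds htu huσ)] with v hv
    rw [tau_eq_of_Ico hsub ha htT (hsub htT).1 hv.1.le hv.2]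

end Fhat

section Meas

set_option linter.unusedSectionVars false

open MeasureTheory

variable {E : Type*} [NormedAddCommGroup E] [NormedSpace ℝ E]
  [MeasurableSpace E] [BorelSpace E] [SecondCountableTopology E]
variable {T : Set ℝ} {a b : ℝ}
variable (hcl : IsClosed T) (hsub : T ⊆ Icc a b) (ha : a ∈ T) (hb : b ∈ T) (hab : a < b)

include hcl hsub ha hb hab in
theorem fhat_measurable {f : ℝ → E} (hf : RdContinuousOn (tsTk T) f) :
    Measurable (fun u => f (dbrTau T a u)) := by
  set fh : ℝ → E := fun u => f (dbrTau T a u) with hfh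
  set g : ℕ → ℝ → E := fun n u => fh ((⌈u * 2 ^ n⌉ : ℝ) / 2 ^ n) with hg
  have hgm : ∀ n, Measurable (g n) := by
    intro n
    have h1 : Measurable fun u : ℝ => (⌈u * 2 ^ n⌉ : ℤ) :=
      Int.measurable_ceil.comp (measurable_id.mul_const _)
    have h2 : Measurable fun k : ℤ => fh ((k : ℝ) / 2 ^ n) := measurable_from_top
    exact h2.comp h1
  apply measurable_of_tendsto_metrizable hgm
  rw [tendsto_pi_nhds]
  intro u
  have hrc := fhat_rightCont hcl hsub ha hb hab hf u
  apply hrc.comp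
  apply tendsto_nhdsWithin_of_tendsto_nhds_of_eventually_within
  · refine tendsto_of_tendsto_of_tendsto_of_le_of_le' (g := fun _ => u)
      (h := fun n : ℕ => u + (1/2) ^ n) tendsto_const_nhds ?_ ?_ ?_
    · have : Tendsto (fun n : ℕ => u + (1/2 : ℝ) ^ n) atTop (nhds (u + 0)) :=
        tendsto_const_nhds.add
          (tendsto_pow_atTop_nhds_zero_of_lt_one (by norm_num) (by norm_num))
      simpa using this
    · filter_upwards with n
      rw [le_div_iff₀ (by positivity)]
      exact Int.le_ceil _
    · filter_upwards with n
      rw [div_le_iff₀ (by positivity)]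
      have h1 : (⌈u * 2 ^ n⌉ : ℝ) < u * 2 ^ n + 1 := Int.ceil_lt_add_one _
      have : (u + (1/2:ℝ) ^ n) * 2 ^ n = u * 2 ^ n + 1 := by
        rw [add_mul, ← mul_pow]; norm_num
      rw [this]
      exact h1.le
  · filter_upwards with n
    rw [mem_Ici, le_div_iff₀ (by positivity)]
    exact Int.le_ceil _

include hcl hsub ha hb hab in
theorem fhat_bounded {f : ℝ → E} (hf : RdContinuousOn (tsTk T) f) :
    ∃ M : ℝ, ∀ u ∈ Icc a b, ‖f (dbrTau T a u)‖ ≤ M := by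
  set fh : ℝ → E := fun u => f (dbrTau T a u) with hfh
  have hloc : ∀ u ∈ Icc a b, ∃ δ > 0, ∃ M : ℝ, ∀ v ∈ Ioo (u - δ) (u + δ), ‖fh v‖ ≤ M := by
    intro u hu
    -- right bound
    have hrc := fhat_rightCont hcl hsub ha hb hab hf u
    obtain ⟨δr, hδr, hsubr⟩ :=
      Metric.mem_nhdsWithin_iff.1 (Metric.tendsto_nhds.mp hrc 1 one_pos)
    have hright : ∀ v, u ≤ v → v < u + δr → ‖fh v‖ ≤ ‖fh u‖ + 1 := by
      intro v h1 h2
      have hball : v ∈ Metric.ball u δr ∩ Ici u :=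
        ⟨by rw [Metric.mem_ball, Real.dist_eq, abs_lt]; constructor <;> linarith, h1⟩
      have := hsubr hball
      have hd : dist (fh v) (fh u) < 1 := this
      have := norm_sub_norm_le (fh v) (fh u)
      rw [← dist_eq_norm] at this
      linarith
    -- left bound
    have hleft : ∃ δl > 0, ∃ Ml : ℝ, ∀ v ∈ Ioo (u - δl) u, ‖fh v‖ ≤ Ml := by
      rcases le_or_gt u a with h | h
      · refine ⟨1, one_pos, ‖f a‖, fun v hv => ?_⟩
        have : fh v = f a := by
          show f (dbrTau T a v) = f a
          rw [tau_of_le_a hsub ha (le_of_lt (lt_of_lt_of_le hv.2 h))]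
        rw [this]
      · have hne : ({s | s ∈ T ∧ s < u}).Nonempty := ⟨a, ha, h⟩
        have hρle : tsRho T u ≤ u := ts_rho_le
        rcases eq_or_lt_of_le hρle with heq | hlt
        · -- left-dense
          have hρT : tsRho T u ∈ T := ts_rho_mem hcl hne (ts_bddAbove hsub)
          have huT : u ∈ T := heq ▸ hρT
          have hutk : u ∈ tsTk T := by
            rcases eq_or_lt_of_le hu.2 with he | hl
            · rw [ts_tk_eq_self hsub ha hb (by rw [← he]; exact heq)]
              exact huT
            · exact ts_mem_tk_of_lt hsub ha hb hab huT hl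
          have hρtk : tsRho (tsTk T) u = u := by
            rw [ts_rho_tk_eq hsub ha hb hab hu.2]; exact heq
          obtain ⟨l, hl⟩ := (hf u hutk).2 hρtk
          obtain ⟨δ₁, hδ₁, hsubs⟩ :=
            Metric.mem_nhdsWithin_iff.1 (Metric.tendsto_nhds.mp hl 1 one_pos)
          have heq' : sSup {s | s ∈ T ∧ s < u} = u := by
            rw [tsRho, if_pos hne] at heq; exact heq
          obtain ⟨w, hw, hww⟩ := exists_lt_of_lt_csSup hne
            (by rw [heq']; linarith : u - δ₁ < sSup {s | s ∈ T ∧ s < u})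
          refine ⟨u - w, by linarith [hw.2], ‖l‖ + 1, fun v hv => ?_⟩
          have hva : a ≤ v := le_trans (hsub hw.1).1 (by linarith [hv.1])
          have hwv : w ≤ dbrTau T a v := le_tau hsub hw.1 (by linarith [hv.1])
          have hτv : dbrTau T a v ≤ v := tau_le' hsub ha v hva
          have hmem : dbrTau T a v ∈ Metric.ball u δ₁ ∩ (tsTk T ∩ Iio u) := by
            refine ⟨?_, ?_, ?_⟩
            · rw [Metric.mem_ball, Real.dist_eq, abs_lt]
              constructor <;> [linarith [hv.1, hv.2]; linarith [hv.2]]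
            · exact ts_mem_tk_of_lt hsub ha hb hab (tau_mem hcl hsub ha v)
                (lt_of_le_of_lt hτv (lt_of_lt_of_le hv.2 hu.2))
            · exact lt_of_le_of_lt hτv hv.2
          have hd : dist (f (dbrTau T a v)) l < 1 := hsubs hmem
          have := norm_sub_norm_le (f (dbrTau T a v)) l
          rw [← dist_eq_norm] at this
          have : ‖fh v‖ ≤ ‖l‖ + dist (f (dbrTau T a v)) l := by
            show ‖f (dbrTau T a v)‖ ≤ _
            calc ‖f (dbrTau T a v)‖ = ‖l + (f (dbrTau T a v) - l)‖ := by
                  rw [show l + (f (dbrTau T a v) - l) = f (dbrTau T a v) from by abel]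
              _ ≤ ‖l‖ + ‖f (dbrTau T a v) - l‖ := norm_add_le _ _
              _ = ‖l‖ + dist (f (dbrTau T a v)) l := by rw [dist_eq_norm]
          linarith
        · -- left-scattered
          have hρT : tsRho T u ∈ T := ts_rho_mem hcl hne (ts_bddAbove hsub)
          have hρa : a ≤ tsRho T u := (hsub hρT).1
          have hσρ : u ≤ tsSigma T (tsRho T u) := by
            have hne2 : ({s | s ∈ T ∧ tsRho T u < s}).Nonempty :=
              ⟨b, hb, lt_of_lt_of_le hlt hu.2⟩
            rw [tsSigma, if_pos hne2]
            refine le_csInf hne2 fun x hx => ?_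
            by_contra hcon
            push_neg at hcon
            exact absurd (ts_rho_lb hx.1 hcon (ts_bddAbove hsub)) (not_le.2 hx.2)
          refine ⟨u - tsRho T u, by linarith, ‖f (tsRho T u)‖, fun v hv => ?_⟩
          have : fh v = f (tsRho T u) := by
            show f (dbrTau T a v) = _
            rw [tau_eq_of_Ico hsub ha hρT hρa (by linarith [hv.1])
              (lt_of_lt_of_le hv.2 hσρ)]
          rw [this]
    obtain ⟨δl, hδl, Ml, hMl⟩ := hleft
    refine ⟨min δl δr, lt_min hδl hδr, max Ml (‖fh u‖ + 1), fun v hv => ?_⟩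
    rcases lt_or_ge v u with hvu | huv
    · refine le_trans (hMl v ⟨?_, hvu⟩) (le_max_left _ _)
      have := hv.1
      have h1 : u - min δl δr ≤ v := this.le
      have := min_le_left δl δr
      linarith [hv.1]
    · refine le_trans (hright v huv ?_) (le_max_right _ _)
      have := min_le_right δl δr
      linarith [hv.2]
  choose! δ hδ M hM using hloc
  have hcov : Icc a b ⊆ ⋃ u ∈ Icc a b, Ioo (u - δ u) (u + δ u) := by
    intro u hu
    have := hδ u hu
    exact mem_biUnion hu ⟨by linarith, by linarith⟩
  obtain ⟨s, hssub, hfin, hcover⟩ :=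
    isCompact_Icc.elim_finite_subcover_image (fun u _ => isOpen_Ioo) hcov
  have haicc : a ∈ Icc a b := ⟨le_refl a, hab.le⟩
  obtain ⟨u₀, hu₀, _⟩ := mem_iUnion₂.1 (hcover haicc)
  have htne : hfin.toFinset.Nonempty := ⟨u₀, hfin.mem_toFinset.2 hu₀⟩
  refine ⟨hfin.toFinset.sup' htne M, fun v hv => ?_⟩
  obtain ⟨u, huS, hvIoo⟩ := mem_iUnion₂.1 (hcover hv)
  exact le_trans (hM u (hssub huS) v hvIoo) (Finset.le_sup' M (hfin.mem_toFinset.2 huS))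

theorem intervalIntegrable_of_bdd {h : ℝ → E} {M : ℝ} (hm : Measurable h)
    (hbd : ∀ u ∈ Icc a b, ‖h u‖ ≤ M) {x y : ℝ} (hx : x ∈ Icc a b) (hy : y ∈ Icc a b) :
    IntervalIntegrable h volume x y := by
  rw [intervalIntegrable_iff]
  have hsubI : uIoc x y ⊆ Icc a b := fun u hu =>
    ⟨le_trans (le_min hx.1 hy.1) hu.1.le, le_trans hu.2 (max_le hx.2 hy.2)⟩
  haveI : IsFiniteMeasure (volume.restrict (uIoc x y)) := by
    constructor
    rw [Measure.restrict_apply_univ]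
    exact lt_of_le_of_lt (measure_mono hsubI)
      (by rw [Real.volume_Icc]; exact ENNReal.ofReal_lt_top)
  apply MeasureTheory.Integrable.mono' (integrable_const M) hm.aestronglyMeasurable.restrict
  exact (ae_restrict_iff' measurableSet_uIoc).2 (ae_of_all _ fun u hu => hbd u (hsubI hu))

end Meas

section AntiDeriv

set_option linter.unusedSectionVars false

open MeasureTheory

variable {E : Type*} [NormedAddCommGroup E] [NormedSpace ℝ E]
  [MeasurableSpace E] [BorelSpace E] [SecondCountableTopology E] [CompleteSpace E]
variable {T : Set ℝ} {a b : ℝ}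
variable (hcl : IsClosed T) (hsub : T ⊆ Icc a b) (ha : a ∈ T) (hb : b ∈ T) (hab : a < b)

include hcl hsub ha hb hab in
theorem isDeltaAntideriv_integral {f : ℝ → E} (hf : RdContinuousOn (tsTk T) f) :
    ∀ t ∈ tsTk T, deltaDiffAt T (fun x => ∫ u in a..x, f (dbrTau T a u)) t (f t) := by
  have hmeas : Measurable (fun u => f (dbrTau T a u)) :=
    fhat_measurable hcl hsub ha hb hab hf
  obtain ⟨M, hM⟩ := fhat_bounded hcl hsub ha hb hab hf
  have hint : ∀ x ∈ Icc a b, ∀ y ∈ Icc a b,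
      IntervalIntegrable (fun u => f (dbrTau T a u)) volume x y :=
    fun x hx y hy => intervalIntegrable_of_bdd hmeas hM hx hy
  have haicc : a ∈ Icc a b := ⟨le_refl a, hab.le⟩
  intro t htk ε hε
  have htT : t ∈ T := htk.1
  have hticc : t ∈ Icc a b := hsub htT
  have hσT : tsSigma T t ∈ T := ts_sigma_mem hcl htT
  have hσicc : tsSigma T t ∈ Icc a b := hsub hσT
  have htσ : t ≤ tsSigma T t := ts_le_sigma t
  rcases eq_or_lt_of_le htσ with hrd | hrs
  · -- right-dense case
    have hσ : tsSigma T t = t := hrd.symm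
    have hcont : ContinuousWithinAt f (tsTk T) t :=
      (hf t htk).1 (ts_sigma_tk_eq hcl hsub ha hb hab htk hσ)
    obtain ⟨δ₁, hδ₁, hδ₁p⟩ := Metric.continuousWithinAt_iff.1 hcont ε hε
    obtain ⟨κ, hκ, hκT⟩ := exists_kappa hcl hsub ha hb hab htk hσ
    refine ⟨min δ₁ κ, lt_min hδ₁ hκ, fun s hs => ?_⟩
    have hsT : s ∈ T := hs.1
    have hsicc : s ∈ Icc a b := hsub hsT
    have hFdiff : (∫ u in a..tsSigma T t, f (dbrTau T a u)) - ∫ u in a..s, f (dbrTau T a u)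
        = ∫ u in s..tsSigma T t, f (dbrTau T a u) :=
      intervalIntegral.integral_interval_sub_left (hint a haicc _ hσicc) (hint a haicc s hsicc)
    rw [hFdiff]
    have hsplit : (∫ u in s..tsSigma T t, f (dbrTau T a u)) - (tsSigma T t - s) • f t
        = ∫ u in s..tsSigma T t, (f (dbrTau T a u) - f t) := by
      rw [intervalIntegral.integral_sub (hint s hsicc _ hσicc) intervalIntegrable_const,
        intervalIntegral.integral_const]
    rw [hsplit]
    have hbound : ∀ u ∈ uIoc s (tsSigma T t), ‖f (dbrTau T a u) - f t‖ ≤ ε := by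
      intro u hu
      rw [hσ] at hu
      have hmin : min s t ∈ T := by
        rcases min_cases s t with ⟨h1, _⟩ | ⟨h1, _⟩ <;> rw [h1]
        exacts [hsT, htT]
      have h1 : min s t ≤ dbrTau T a u := le_tau hsub hmin hu.1.le
      have h2 : dbrTau T a u ≤ u := tau_le' hsub ha u (le_trans (le_min hsicc.1 hticc.1) hu.1.le)
      have h3 : dbrTau T a u ≤ max s t := le_trans h2 hu.2
      have hτT : dbrTau T a u ∈ T := tau_mem hcl hsub ha u
      have hlo : t - min δ₁ κ < dbrTau T a u := by
        have h0 : (0:ℝ) < min δ₁ κ := lt_min hδ₁ hκ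
        have : t - min δ₁ κ < min s t := lt_min hs.2.1 (by linarith)
        linarith [h1]
      have hhi : dbrTau T a u < t + min δ₁ κ := by
        have : max s t < t + min δ₁ κ := max_lt hs.2.2 (by linarith [lt_min hδ₁ hκ])
        linarith [h3]
      have hτtk : dbrTau T a u ∈ tsTk T :=
        hκT _ hτT (lt_of_lt_of_le hhi (by linarith [min_le_right δ₁ κ]))
      have hdist : dist (dbrTau T a u) t < δ₁ := by
        rw [Real.dist_eq, abs_lt]
        constructor
        · linarith [min_le_left δ₁ κ]
        · linarith [min_le_left δ₁ κ]
      have hfin := hδ₁p hτtk hdist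
      rw [dist_eq_norm] at hfin
      exact hfin.le
    exact intervalIntegral.norm_integral_le_of_norm_le_const hbound
  · -- right-scattered case
    have hμ : 0 < tsSigma T t - t := by linarith
    have hC : (0:ℝ) < M + ‖f t‖ + 1 := by
      have h0 : 0 ≤ M := le_trans (norm_nonneg _) (hM a haicc)
      positivity
    set C := M + ‖f t‖ + 1 with hCdef
    refine ⟨min (tsSigma T t - t) (ε * (tsSigma T t - t) / C), by positivity, fun s hs => ?_⟩
    have hsT : s ∈ T := hs.1
    have hsicc : s ∈ Icc a b := hsub hsT
    have hst : s ≤ t := by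
      by_contra hcon
      push_neg at hcon
      have : s < tsSigma T t := by
        have := hs.2.2
        have h1 := min_le_left (tsSigma T t - t) (ε * (tsSigma T t - t) / C)
        linarith
      exact ts_notMem_Ioo_sigma hsT ⟨hcon, this⟩
    have hFdiff : (∫ u in a..tsSigma T t, f (dbrTau T a u)) - ∫ u in a..s, f (dbrTau T a u)
        = ∫ u in s..tsSigma T t, f (dbrTau T a u) :=
      intervalIntegral.integral_interval_sub_left (hint a haicc _ hσicc) (hint a haicc s hsicc)
    rw [hFdiff]
    have hadj : (∫ u in s..tsSigma T t, f (dbrTau T a u))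
        = (∫ u in s..t, f (dbrTau T a u)) + ∫ u in t..tsSigma T t, f (dbrTau T a u) :=
      (intervalIntegral.integral_add_adjacent_intervals (hint s hsicc t hticc) (hint t hticc _ hσicc)).symm
    have hconstInt : (∫ u in t..tsSigma T t, f (dbrTau T a u)) = (tsSigma T t - t) • f t := by
      have hae : ∀ᵐ u, u ∈ uIoc t (tsSigma T t) → f (dbrTau T a u) = f t := by
        have hnull : ({u : ℝ | ¬(u ∈ uIoc t (tsSigma T t) → f (dbrTau T a u) = f t)} : Set ℝ)
            ⊆ {tsSigma T t} := by
          intro u hu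
          simp only [mem_setOf_eq, _root_.not_imp] at hu
          obtain ⟨huI, hne⟩ := hu
          rw [uIoc_of_le htσ] at huI
          rcases eq_or_lt_of_le huI.2 with h | h
          · exact h
          · exact absurd (by rw [tau_eq_of_Ico hsub ha htT hticc.1 huI.1.le h]) hne
        rw [Filter.eventually_iff, mem_ae_iff]
        exact measure_mono_null (by intro u hu; exact hnull hu) (measure_singleton _)
      rw [intervalIntegral.integral_congr_ae hae, intervalIntegral.integral_const]
    rw [hadj, hconstInt]
    have halg : (∫ u in s..t, f (dbrTau T a u)) + (tsSigma T t - t) • f t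
        - (tsSigma T t - s) • f t = ∫ u in s..t, (f (dbrTau T a u) - f t) := by
      rw [intervalIntegral.integral_sub (hint s hsicc t hticc) intervalIntegrable_const,
        intervalIntegral.integral_const]
      have : (tsSigma T t - t) • f t - (tsSigma T t - s) • f t = -((t - s) • f t) := by
        rw [← sub_smul, ← neg_smul]
        congr 1
        ring
      rw [sub_eq_add_neg, add_assoc, ← sub_eq_add_neg ((tsSigma T t - t) • f t), this]
      abel
    rw [halg]
    have hbound : ∀ u ∈ uIoc s t, ‖f (dbrTau T a u) - f t‖ ≤ M + ‖f t‖ := by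
      intro u hu
      have huicc : u ∈ Icc a b := ⟨le_trans (le_min hsicc.1 hticc.1) hu.1.le,
        le_trans hu.2 (max_le hsicc.2 hticc.2)⟩
      calc ‖f (dbrTau T a u) - f t‖ ≤ ‖f (dbrTau T a u)‖ + ‖f t‖ := norm_sub_le _ _
        _ ≤ M + ‖f t‖ := add_le_add (hM u huicc) (le_refl _)
    calc ‖∫ u in s..t, (f (dbrTau T a u) - f t)‖
        ≤ (M + ‖f t‖) * |t - s| := intervalIntegral.norm_integral_le_of_norm_le_const hbound
      _ ≤ (M + ‖f t‖) * (ε * (tsSigma T t - t) / C) := by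
          have h0M : (0:ℝ) ≤ M := le_trans (norm_nonneg _) (hM a haicc)
          apply mul_le_mul_of_nonneg_left _ (by positivity)
          rw [abs_of_nonneg (by linarith : (0:ℝ) ≤ t - s)]
          have := hs.2.1
          have h1 := min_le_right (tsSigma T t - t) (ε * (tsSigma T t - t) / C)
          linarith
      _ ≤ ε * (tsSigma T t - t) := by
          rw [hCdef]
          rw [div_eq_mul_inv]
          have hle : M + ‖f t‖ ≤ C := by rw [hCdef]; linarith
          calc (M + ‖f t‖) * (ε * (tsSigma T t - t) * C⁻¹)
              ≤ C * (ε * (tsSigma T t - t) * C⁻¹) := by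
                apply mul_le_mul_of_nonneg_right hle (by positivity)
            _ = ε * (tsSigma T t - t) := by field_simp
      _ ≤ ε * |tsSigma T t - s| := by
          rw [abs_of_nonneg (by linarith : (0:ℝ) ≤ tsSigma T t - s)]
          have : tsSigma T t - t ≤ tsSigma T t - s := by linarith
          exact mul_le_mul_of_nonneg_left this hε.le

end AntiDeriv

section Constancy

set_option linter.unusedSectionVars false

variable {E : Type*} [NormedAddCommGroup E] [NormedSpace ℝ E]
variable {T : Set ℝ} {a b : ℝ}
variable (hcl : IsClosed T) (hsub : T ⊆ Icc a b) (ha : a ∈ T) (hb : b ∈ T) (hab : a < b)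

include hcl hsub ha hb hab in
theorem eq_of_deltaDiff_zero {h : ℝ → E}
    (hd : ∀ t ∈ tsTk T, deltaDiffAt T h t (0 : E)) : h b = h a := by
  have key : ∀ ε > 0, ‖h b - h a‖ ≤ ε * (b - a) := by
    intro ε hε
    set A := {y | y ∈ T ∧ ∀ z, z ∈ T → z ∈ Icc a y → ‖h z - h a‖ ≤ ε * (z - a)} with hA
    have haA : a ∈ A := by
      refine ⟨ha, fun z hzT hz => ?_⟩
      have : z = a := le_antisymm hz.2 hz.1
      rw [this]
      simp
    have hAsub : A ⊆ T := fun x hx => hx.1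
    have hAbdd : BddAbove A := (ts_bddAbove hsub).mono hAsub
    have hAne : A.Nonempty := ⟨a, haA⟩
    set r := sSup A with hr
    have hrT : r ∈ T := by
      have h1 : r ∈ closure A := csSup_mem_closure hAne hAbdd
      have h2 : closure A ⊆ closure T := closure_mono hAsub
      rw [hcl.closure_eq] at h2
      exact h2 h1
    have har : a ≤ r := le_csSup hAbdd haA
    have hrb : r ≤ b := (hsub hrT).2
    -- every T-point strictly below r satisfies the bound
    have step0 : ∀ z, z ∈ T → z ∈ Ico a r → ‖h z - h a‖ ≤ ε * (z - a) := by
      intro z hzT hz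
      obtain ⟨y, hyA, hzy⟩ := exists_lt_of_lt_csSup hAne hz.2
      exact hyA.2 z hzT ⟨hz.1, hzy.le⟩
    -- the bound holds at r itself
    have stepr : ‖h r - h a‖ ≤ ε * (r - a) := by
      by_cases hrA : r ∈ A
      · exact hrA.2 r hrT ⟨har, le_refl r⟩
      · -- r ∉ A, r = sup A : A accumulates at r from the left
        have hrk : r ∈ tsTk T := by
          rcases eq_or_lt_of_le hrb with he | hl
          · -- r = b ; must have ρb = b, else A ⊆ Iic ρb gives contradiction
            rcases eq_or_lt_of_le (ts_rhoB_le ha hab) with hρ | hρ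
            · rw [ts_tk_eq_self hsub ha hb hρ]; exact hrT
            · exfalso
              have hAle : ∀ y ∈ A, y ≤ tsRho T b := by
                intro y hy
                have hyT := hAsub hy
                have hyb : y < b := by
                  rcases eq_or_lt_of_le (hsub hyT).2 with he2 | hl2
                  · exact absurd (he2 ▸ hy) (he ▸ hrA)
                  · exact hl2
                by_contra hcon
                push_neg at hcon
                exact ts_notMem_Ioo_rhoB hsub ha hab hyT ⟨hcon, hyb⟩
              have : r ≤ tsRho T b := csSup_le hAne hAle
              rw [he] at this
              linarith
          · exact ts_mem_tk_of_lt hsub ha hb hab hrT hl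
        refine le_of_forall_pos_le_add fun κ hκ => ?_
        have hεp : (0:ℝ) < κ / (2 * (b - a) + 2) := by
          have : (0:ℝ) < b - a := by linarith
          positivity
        obtain ⟨δ, hδ, hδp⟩ := hd r hrk _ hεp
        set δ' := min δ 1 with hδ'
        have hδ'p : 0 < δ' := lt_min hδ one_pos
        obtain ⟨y, hyA, hy⟩ := exists_lt_of_lt_csSup hAne (by linarith : r - δ' < sSup A)
        have hyr : y < r := lt_of_le_of_ne (le_csSup hAbdd hyA) (fun he => hrA (he ▸ hyA))
        have hyT := hAsub hyA
        have hrmem : r ∈ T ∩ Ioo (r - δ) (r + δ) := ⟨hrT, by linarith, by linarith⟩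
        have hymem : y ∈ T ∩ Ioo (r - δ) (r + δ) :=
          ⟨hyT, by have := min_le_left δ 1; linarith, by linarith⟩
        have e1 := hδp r hrmem
        have e2 := hδp y hymem
        rw [smul_zero, sub_zero] at e1 e2
        have hσr : r ≤ tsSigma T r := ts_le_sigma r
        have hσrb : tsSigma T r ≤ b := ts_sigma_le hcl hsub hrT
        have habs1 : |tsSigma T r - r| = tsSigma T r - r := abs_of_nonneg (by linarith)
        have habs2 : |tsSigma T r - y| = tsSigma T r - y := abs_of_nonneg (by linarith)
        rw [habs1] at e1
        rw [habs2] at e2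
        have hry : ‖h r - h y‖ ≤ κ / (2 * (b - a) + 2) * ((tsSigma T r - r) + (tsSigma T r - y)) := by
          calc ‖h r - h y‖ = ‖(h (tsSigma T r) - h y) - (h (tsSigma T r) - h r)‖ := by
                congr 1; abel
            _ ≤ ‖h (tsSigma T r) - h y‖ + ‖h (tsSigma T r) - h r‖ := norm_sub_le _ _
            _ ≤ κ / (2 * (b - a) + 2) * (tsSigma T r - y) + κ / (2 * (b - a) + 2) * (tsSigma T r - r) := add_le_add e2 e1
            _ = κ / (2 * (b - a) + 2) * ((tsSigma T r - r) + (tsSigma T r - y)) := by ring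
        have hbnd : (tsSigma T r - r) + (tsSigma T r - y) ≤ 2 * (b - a) + 1 := by
          have hya : a ≤ y := (hsub hyT).1
          have : r - δ' < y := hy
          have : δ' ≤ 1 := min_le_right δ 1
          linarith
        have hry2 : ‖h r - h y‖ ≤ κ := by
          calc ‖h r - h y‖ ≤ κ / (2 * (b - a) + 2) * ((tsSigma T r - r) + (tsSigma T r - y)) := hry
            _ ≤ κ / (2 * (b - a) + 2) * (2 * (b - a) + 1) := by
                apply mul_le_mul_of_nonneg_left hbnd hεp.le
            _ ≤ κ := by
                rw [div_mul_eq_mul_div, div_le_iff₀ (by linarith)]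
                nlinarith
        have hyb : ‖h y - h a‖ ≤ ε * (y - a) := hyA.2 y hyT ⟨(hsub hyT).1, le_refl y⟩
        calc ‖h r - h a‖ ≤ ‖h r - h y‖ + ‖h y - h a‖ := by
              have := norm_add_le (h r - h y) (h y - h a)
              simpa using this
          _ ≤ κ + ε * (y - a) := add_le_add hry2 hyb
          _ ≤ ε * (r - a) + κ := by
              have : y - a ≤ r - a := by linarith
              have := mul_le_mul_of_nonneg_left this hε.le
              linarith
    have hrA : r ∈ A := by
      refine ⟨hrT, fun z hzT hz => ?_⟩
      rcases eq_or_lt_of_le hz.2 with he | hl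
      · rw [he]; exact stepr
      · exact step0 z hzT ⟨hz.1, hl⟩
    -- now show r = b
    have hrb' : r = b := by
      by_contra hcon
      have hrltb : r < b := lt_of_le_of_ne hrb hcon
      have hrk : r ∈ tsTk T := ts_mem_tk_of_lt hsub ha hb hab hrT hrltb
      obtain ⟨δ, hδ, hδp⟩ := hd r hrk ε hε
      have hσr : r ≤ tsSigma T r := ts_le_sigma r
      rcases eq_or_lt_of_le hσr with hrd | hrs
      · -- right-dense : find T-point in (r, r+δ)
        have hne : ({s | s ∈ T ∧ r < s}).Nonempty := ⟨b, hb, hrltb⟩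
        have hinf : sInf {s | s ∈ T ∧ r < s} = r := by
          rw [tsSigma, if_pos hne] at hrd; exact hrd.symm
        obtain ⟨z, hz, hzlt⟩ := (csInf_lt_iff ⟨r, fun x hx => hx.2.le⟩ hne).1
          (by rw [hinf]; linarith : sInf {s | s ∈ T ∧ r < s} < r + δ)
        have hzA : z ∈ A := by
          refine ⟨hz.1, fun w hwT hw => ?_⟩
          rcases le_or_gt w r with hwr | hwr
          · exact hrA.2 w hwT ⟨hw.1, hwr⟩
          · have hwmem : w ∈ T ∩ Ioo (r - δ) (r + δ) :=
              ⟨hwT, by linarith, by linarith [hw.2]⟩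
            have e := hδp w hwmem
            rw [smul_zero, sub_zero, ← hrd] at e
            have habs : |r - w| = w - r := by rw [abs_sub_comm]; exact abs_of_nonneg (by linarith)
            rw [habs] at e
            have err : ‖h r - h a‖ ≤ ε * (r - a) := hrA.2 r hrT ⟨har, le_refl r⟩
            calc ‖h w - h a‖ ≤ ‖h w - h r‖ + ‖h r - h a‖ := by
                  have := norm_add_le (h w - h r) (h r - h a)
                  simpa using this
              _ ≤ ε * (w - r) + ε * (r - a) := by
                  rw [← norm_neg (h w - h r)] at *
                  have : ‖-(h w - h r)‖ = ‖h r - h w‖ := by rw [neg_sub]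
                  rw [this]
                  exact add_le_add e err
              _ = ε * (w - a) := by ring
        have : z ≤ r := le_csSup hAbdd hzA
        have := hz.2
        linarith
      · -- right-scattered : σ r ∈ A and σ r > r
        have hσT : tsSigma T r ∈ T := ts_sigma_mem hcl hrT
        have e := hδp r ⟨hrT, by linarith, by linarith⟩
        rw [smul_zero, sub_zero] at e
        have habs : |tsSigma T r - r| = tsSigma T r - r := abs_of_nonneg (by linarith)
        rw [habs] at e
        have hσA : tsSigma T r ∈ A := by
          refine ⟨hσT, fun w hwT hw => ?_⟩
          rcases le_or_gt w r with hwr | hwr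
          · exact hrA.2 w hwT ⟨hw.1, hwr⟩
          · have hwσ : w = tsSigma T r := by
              rcases eq_or_lt_of_le hw.2 with he | hl
              · exact he
              · exact absurd ⟨hwr, hl⟩ (ts_notMem_Ioo_sigma hwT)
            have err : ‖h r - h a‖ ≤ ε * (r - a) := hrA.2 r hrT ⟨har, le_refl r⟩
            rw [hwσ]
            calc ‖h (tsSigma T r) - h a‖ ≤ ‖h (tsSigma T r) - h r‖ + ‖h r - h a‖ := by
                  have := norm_add_le (h (tsSigma T r) - h r) (h r - h a)
                  simpa using this
              _ ≤ ε * (tsSigma T r - r) + ε * (r - a) := add_le_add e err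
              _ = ε * (tsSigma T r - a) := by ring
        have : tsSigma T r ≤ r := le_csSup hAbdd hσA
        linarith
    rw [← hrb']
    exact hrA.2 r hrT ⟨har, le_refl r⟩
  by_contra hne
  have hpos : 0 < ‖h b - h a‖ := by
    rw [norm_pos_iff, sub_ne_zero]
    exact fun he => hne he
  have hba : (0:ℝ) < b - a := by linarith
  have hk := key (‖h b - h a‖ / (2 * (b - a))) (by positivity)
  have h2 : ‖h b - h a‖ / (2 * (b - a)) * (b - a) = ‖h b - h a‖ / 2 := by
    field_simp
  rw [h2] at hk
  linarith

end Constancy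


open MeasureTheory in
open RealInnerProductSpace in
theorem dubois_reymond_lemma_time_scales
    {n : ℕ} (hn : 1 ≤ n)
    (T₀ : Set ℝ) (hT₀closed : IsClosed T₀)
    (a b : ℝ) (ha : a ∈ T₀) (hb : b ∈ T₀) (hab : a < b)
    (T : Set ℝ) (hT : T = Icc a b ∩ T₀)
    (hT3 : ∃ c ∈ T, c ≠ a ∧ c ≠ b)
    (g : ℝ → En n) (hg : RdContinuousOn (tsTk T) g) :
    (∀ η ηd : ℝ → En n, C1rd T η ηd → η a = 0 → η b = 0 →
      ∀ F : ℝ → ℝ, IsDeltaAntideriv T (fun t => ⟪g t, ηd t⟫) F → F b - F a = 0)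
    ↔ (∃ c : En n, ∀ t ∈ tsTk T, g t = c) := by
  have hcl : IsClosed T := by rw [hT]; exact isClosed_Icc.inter hT₀closed
  have hsub : T ⊆ Icc a b := by rw [hT]; exact inter_subset_left
  have haT : a ∈ T := by rw [hT]; exact ⟨⟨le_refl a, hab.le⟩, ha⟩
  have hbT : b ∈ T := by rw [hT]; exact ⟨⟨hab.le, le_refl b⟩, hb⟩
  have haicc : a ∈ Icc a b := ⟨le_refl a, hab.le⟩
  have hbicc : b ∈ Icc a b := ⟨hab.le, le_refl b⟩
  constructor
  · -- forward direction
    intro H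
    have hmeas : Measurable (fun u => g (dbrTau T a u)) :=
      fhat_measurable hcl hsub haT hbT hab hg
    obtain ⟨M, hM⟩ := fhat_bounded hcl hsub haT hbT hab hg
    have hintg : IntervalIntegrable (fun u => g (dbrTau T a u)) volume a b :=
      intervalIntegrable_of_bdd hmeas hM haicc hbicc
    set c : En n := (b - a)⁻¹ • ∫ u in a..b, g (dbrTau T a u) with hcdef
    have hbne : b - a ≠ 0 := ne_of_gt (by linarith)
    have hbc : (b - a) • c = ∫ u in a..b, g (dbrTau T a u) := by
      rw [hcdef, smul_smul, mul_inv_cancel₀ hbne, one_smul]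
    have hAg := isDeltaAntideriv_integral hcl hsub haT hbT hab hg
    have hC1 : C1rd T (fun x => (∫ u in a..x, g (dbrTau T a u)) - (x - a) • c)
        (fun t => g t - c) := by
      constructor
      · intro t ht
        exact (hAg t ht).sub (deltaDiffAt_linear c)
      · exact hg.compCont (continuous_id.sub continuous_const)
    have hηa : (∫ u in a..(a:ℝ), g (dbrTau T a u)) - ((a:ℝ) - a) • c = 0 := by
      rw [intervalIntegral.integral_same, sub_self, zero_smul, sub_zero]
    have hηb : (∫ u in a..b, g (dbrTau T a u)) - (b - a) • c = 0 := by
      rw [hbc, sub_self]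
    have hfrd : RdContinuousOn (tsTk T) (fun t => (⟪g t, g t - c⟫ : ℝ)) := by
      have hφ : Continuous fun x : En n => (⟪x, x - c⟫ : ℝ) :=
        continuous_id.inner (continuous_id.sub continuous_const)
      exact hg.compCont hφ
    have hAf := isDeltaAntideriv_integral hcl hsub haT hbT hab hfrd
    have happ := H (fun x => (∫ u in a..x, g (dbrTau T a u)) - (x - a) • c)
      (fun t => g t - c) hC1 hηa hηb
      (fun x => ∫ u in a..x, (⟪g (dbrTau T a u), g (dbrTau T a u) - c⟫ : ℝ)) hAf
    have hzero : (∫ u in a..b, (⟪g (dbrTau T a u), g (dbrTau T a u) - c⟫ : ℝ)) = 0 := by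
      have happ' : (∫ u in a..b, (⟪g (dbrTau T a u), g (dbrTau T a u) - c⟫ : ℝ))
          - (∫ u in a..(a:ℝ), (⟪g (dbrTau T a u), g (dbrTau T a u) - c⟫ : ℝ)) = 0 := happ
      rwa [intervalIntegral.integral_same, sub_zero] at happ'
    -- integrability of the pieces
    have hgsub_meas : Measurable (fun u => g (dbrTau T a u) - c) := hmeas.sub measurable_const
    have hgsub_bdd : ∀ u ∈ Icc a b, ‖g (dbrTau T a u) - c‖ ≤ M + ‖c‖ := fun u hu =>
      le_trans (norm_sub_le _ _) (add_le_add (hM u hu) (le_refl _))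
    have hintsub : IntervalIntegrable (fun u => g (dbrTau T a u) - c) volume a b :=
      intervalIntegrable_of_bdd hgsub_meas hgsub_bdd haicc hbicc
    have hsq_meas : Measurable (fun u => (‖g (dbrTau T a u) - c‖ ^ 2 : ℝ)) :=
      hgsub_meas.norm.pow_const 2
    have hintsq : IntervalIntegrable (fun u => (‖g (dbrTau T a u) - c‖ ^ 2 : ℝ)) volume a b := by
      refine intervalIntegrable_of_bdd hsq_meas (M := (M + ‖c‖) ^ 2) (fun u hu => ?_) haicc hbicc
      rw [Real.norm_eq_abs, abs_of_nonneg (sq_nonneg _)]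
      exact pow_le_pow_left₀ (norm_nonneg _) (hgsub_bdd u hu) 2
    have hintin : IntervalIntegrable (fun u => (⟪c, g (dbrTau T a u) - c⟫ : ℝ)) volume a b := by
      refine intervalIntegrable_of_bdd (measurable_const.inner hgsub_meas)
        (M := ‖c‖ * (M + ‖c‖)) (fun u hu => ?_) haicc hbicc
      refine le_trans (norm_inner_le_norm _ _) ?_
      exact mul_le_mul_of_nonneg_left (hgsub_bdd u hu) (norm_nonneg _)
    have hid : ∀ u : ℝ, (⟪g (dbrTau T a u), g (dbrTau T a u) - c⟫ : ℝ)
        = ‖g (dbrTau T a u) - c‖ ^ 2 + ⟪c, g (dbrTau T a u) - c⟫ := by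
      intro u
      have hx : g (dbrTau T a u) = (g (dbrTau T a u) - c) + c := by abel
      calc (⟪g (dbrTau T a u), g (dbrTau T a u) - c⟫ : ℝ)
          = ⟪(g (dbrTau T a u) - c) + c, g (dbrTau T a u) - c⟫ := by rw [← hx]
        _ = ⟪g (dbrTau T a u) - c, g (dbrTau T a u) - c⟫ + ⟪c, g (dbrTau T a u) - c⟫ :=
            inner_add_left _ _ _
        _ = ‖g (dbrTau T a u) - c‖ ^ 2 + ⟪c, g (dbrTau T a u) - c⟫ := by
            rw [real_inner_self_eq_norm_sq]
    have hsplit : (∫ u in a..b, (⟪g (dbrTau T a u), g (dbrTau T a u) - c⟫ : ℝ))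
        = (∫ u in a..b, (‖g (dbrTau T a u) - c‖ ^ 2 : ℝ))
          + ∫ u in a..b, (⟪c, g (dbrTau T a u) - c⟫ : ℝ) := by
      rw [← intervalIntegral.integral_add hintsq hintin]
      apply intervalIntegral.integral_congr
      intro u _
      exact hid u
    have hsecond : (∫ u in a..b, (⟪c, g (dbrTau T a u) - c⟫ : ℝ)) = 0 := by
      have hzero2 : (∫ u in a..b, (g (dbrTau T a u) - c)) = 0 := by
        rw [intervalIntegral.integral_sub hintg intervalIntegrable_const,
          intervalIntegral.integral_const, ← hbc, sub_self]
      have hcomm := (innerSL ℝ c).intervalIntegral_comp_comm hintsub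
        (a := a) (b := b) (μ := volume)
      have hlhs : (∫ u in a..b, (⟪c, g (dbrTau T a u) - c⟫ : ℝ))
          = ∫ u in a..b, (innerSL ℝ c) (g (dbrTau T a u) - c) := by
        apply intervalIntegral.integral_congr
        intro u _
        simp only [innerSL_apply_apply]
      rw [hlhs, hcomm, hzero2, map_zero]
    have hmain : (∫ u in a..b, (‖g (dbrTau T a u) - c‖ ^ 2 : ℝ)) = 0 := by
      rw [hsplit, hsecond, add_zero] at hzero
      exact hzero
    have hae := (intervalIntegral.integral_eq_zero_iff_of_le_of_nonneg_ae hab.le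
      (ae_of_all _ fun u => sq_nonneg _) hintsq).1 hmain
    have hbad : volume ({u : ℝ | g (dbrTau T a u) ≠ c} ∩ Ioc a b) = 0 := by
      rw [EventuallyEq, ae_iff] at hae
      rw [Measure.restrict_apply' measurableSet_Ioc] at hae
      refine measure_mono_null (fun u hu => ?_) hae
      refine ⟨?_, hu.2⟩
      simp only [mem_setOf_eq, Pi.zero_apply]
      intro h0
      apply hu.1
      have h1 : ‖g (dbrTau T a u) - c‖ = 0 := by
        have := sq_eq_zero_iff.1 h0
        exact this
      rw [norm_eq_zero, sub_eq_zero] at h1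
      exact h1
    have hkey : ∀ s t' : ℝ, s < t' → Ioo s t' ⊆ Ioc a b →
        ∃ u ∈ Ioo s t', g (dbrTau T a u) = c := by
      intro s t' hst hsubI
      by_contra hcon
      push_neg at hcon
      have hsubbad : Ioo s t' ⊆ {u | g (dbrTau T a u) ≠ c} ∩ Ioc a b :=
        fun u hu => ⟨hcon u hu, hsubI hu⟩
      have h0 := measure_mono_null hsubbad hbad
      rw [Real.volume_Ioo] at h0
      exact absurd h0 (ne_of_gt (ENNReal.ofReal_pos.2 (by linarith)))
    refine ⟨c, fun t htk => ?_⟩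
    have htT : t ∈ T := htk.1
    have hticc := hsub htT
    have htσ := ts_le_sigma (T := T) t
    rcases eq_or_lt_of_le htσ with hrd | hrs
    · -- right-dense
      have hσ : tsSigma T t = t := hrd.symm
      by_contra hnegc
      have hcont : ContinuousWithinAt g (tsTk T) t :=
        (hg t htk).1 (ts_sigma_tk_eq hcl hsub haT hbT hab htk hσ)
      have hdpos : 0 < dist (g t) c := by rw [dist_pos]; exact hnegc
      obtain ⟨δ₁, hδ₁, hδ₁p⟩ := Metric.continuousWithinAt_iff.1 hcont _ hdpos
      rcases eq_or_lt_of_le hticc.2 with heb | hlb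
      · -- t = b, b left-dense
        subst heb
        have hρb : tsRho T t = t := ts_rhoB_eq_of_b_mem_tk hsub haT hbT hab htk
        have hne2 : ({s | s ∈ T ∧ s < t}).Nonempty := ⟨a, haT, hab⟩
        have heq' : sSup {s | s ∈ T ∧ s < t} = t := by
          rw [tsRho, if_pos hne2] at hρb; exact hρb
        obtain ⟨w, hw, hww⟩ := exists_lt_of_lt_csSup hne2
          (by rw [heq']; linarith : t - δ₁ < sSup {s | s ∈ T ∧ s < t})
        obtain ⟨u, hu, hgu⟩ := hkey w t hw.2
          (fun x hx => ⟨lt_of_le_of_lt (hsub hw.1).1 hx.1, hx.2.le⟩)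
        have hwa : a ≤ w := (hsub hw.1).1
        have hwτ : w ≤ dbrTau T a u := le_tau hsub hw.1 hu.1.le
        have hτu : dbrTau T a u ≤ u := tau_le' hsub haT u (le_trans hwa hu.1.le)
        have hτtk : dbrTau T a u ∈ tsTk T :=
          ts_mem_tk_of_lt hsub haT hbT hab (tau_mem hcl hsub haT u)
            (lt_of_le_of_lt hτu hu.2)
        have hdist : dist (dbrTau T a u) t < δ₁ := by
          rw [Real.dist_eq, abs_lt]
          constructor <;> [linarith [hu.1, hu.2]; linarith [hu.2]]
        have hfin := hδ₁p hτtk hdist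
        rw [hgu, dist_comm (g t) c] at hfin
        exact absurd hfin (lt_irrefl _)
      · -- t < b
        obtain ⟨κ, hκ, hκT⟩ := exists_kappa hcl hsub haT hbT hab htk hσ
        set δ' := min (min δ₁ κ) (b - t) with hδ'def
        have hδ'p : 0 < δ' := lt_min (lt_min hδ₁ hκ) (by linarith)
        obtain ⟨u, hu, hgu⟩ := hkey t (t + δ') (by linarith)
          (fun x hx => ⟨lt_of_le_of_lt hticc.1 hx.1,
            by
              have h1 : δ' ≤ b - t := min_le_right _ _
              have := hx.2
              linarith⟩)
        have htτ : t ≤ dbrTau T a u := le_tau hsub htT hu.1.le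
        have hτu : dbrTau T a u ≤ u := tau_le' hsub haT u (le_trans hticc.1 hu.1.le)
        have hτtk : dbrTau T a u ∈ tsTk T := by
          refine hκT _ (tau_mem hcl hsub haT u) ?_
          have h1 : δ' ≤ κ := le_trans (min_le_left _ _) (min_le_right _ _)
          have := hu.2
          linarith
        have hdist : dist (dbrTau T a u) t < δ₁ := by
          have h1 : δ' ≤ δ₁ := le_trans (min_le_left _ _) (min_le_left _ _)
          rw [Real.dist_eq, abs_lt]
          constructor
          · linarith [hu.1]
          · linarith [hu.2]
        have hfin := hδ₁p hτtk hdist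
        rw [hgu, dist_comm (g t) c] at hfin
        exact absurd hfin (lt_irrefl _)
    · -- right-scattered
      obtain ⟨u, hu, hgu⟩ := hkey t (tsSigma T t) hrs
        (fun x hx => ⟨lt_of_le_of_lt hticc.1 hx.1,
          le_trans hx.2.le (ts_sigma_le hcl hsub htT)⟩)
      rwa [tau_eq_of_Ico hsub haT htT hticc.1 hu.1.le hu.2] at hgu
  · -- backward direction
    rintro ⟨c, hc⟩ η ηd hC1 hηa hηb F hF
    have hD : ∀ t ∈ tsTk T, deltaDiffAt T (fun x => F x - (innerSL ℝ c) (η x)) t (0 : ℝ) := by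
      intro t ht
      have h3 := (hF t ht).sub ((hC1.1 t ht).clm (innerSL ℝ c))
      have he : (⟪g t, ηd t⟫ : ℝ) - (innerSL ℝ c) (ηd t) = 0 := by
        rw [hc t ht, innerSL_apply_apply, sub_self]
      rw [he] at h3
      exact h3
    have heq := eq_of_deltaDiff_zero hcl hsub haT hbT hab hD
    rw [hηa, hηb, map_zero] at heq
    rw [sub_eq_zero]
    linarith
end
end
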